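/- arXiv:0905.4054 — 6 statements merged into one kernel-verified Lean document; each statement's English description precedes it below -/
import Mathlib

section
/- Let c^i_{jk} be smooth structure functions on an open set U ⊆ ℝ^n, symmetric in (j,k), associative, and satisfying the Hertling–Manin condition. Then for every smooth vector field Z on U, the Haantjes tensor H_{V_Z} of the (1,1)-tensor field (V_Z)^i_j = c^i_{jk} Z^k vanishes identically: H_{V_Z}(X,Y) = 0 for all smooth vector fields X, Y on U. -/
open scoped BigOperators

noncomputable section

/-- Vector fields on (an open subset of) `ℝⁿ`, given by their components. -/
abbrev VF (n : ℕ) := Fin n → (Fin n → ℝ) → ℝ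

/-- Structure functions `c^i_{jk}` (and also Christoffel symbols `Γ^i_{jk}`). -/
abbrev SC (n : ℕ) := Fin n → Fin n → Fin n → (Fin n → ℝ) → ℝ

/-- Partial derivative `∂_j f` at `x`. -/
def pd {n : ℕ} (f : (Fin n → ℝ) → ℝ) (j : Fin n) (x : Fin n → ℝ) : ℝ :=
  fderiv ℝ f x (Pi.single j 1)

/-- The Lie bracket `[X,Y]^i = X^j ∂_j Y^i − Y^j ∂_j X^i`. -/
def lieB {n : ℕ} (X Y : VF n) : VF n :=
  fun i x => ∑ j, (X j x * pd (Y i) j x - Y j x * pd (X i) j x)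

/-- `(V X)^i = V^i_j X^j`. -/
def vApp {n : ℕ} (V : Fin n → Fin n → (Fin n → ℝ) → ℝ) (X : VF n) : VF n :=
  fun i x => ∑ j, V i j x * X j x

/-- `(V_Z)^i_j = c^i_{jk} Z^k`. -/
def VZ {n : ℕ} (c : SC n) (Z : VF n) : Fin n → Fin n → (Fin n → ℝ) → ℝ :=
  fun i j x => ∑ k, c i j k x * Z k x

/-- Nijenhuis tensor `N_V(X,Y) = [VX,VY] − V[X,VY] − V[VX,Y] + V²[X,Y]`. -/
def nijenhuis {n : ℕ} (V : Fin n → Fin n → (Fin n → ℝ) → ℝ) (X Y : VF n) : VF n :=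
  fun i x =>
    lieB (vApp V X) (vApp V Y) i x - vApp V (lieB X (vApp V Y)) i x
      - vApp V (lieB (vApp V X) Y) i x + vApp V (vApp V (lieB X Y)) i x

/-- Haantjes tensor `H_V(X,Y) = N_V(VX,VY) − V N_V(X,VY) − V N_V(VX,Y) + V² N_V(X,Y)`. -/
def haantjes {n : ℕ} (V : Fin n → Fin n → (Fin n → ℝ) → ℝ) (X Y : VF n) : VF n :=
  fun i x =>
    nijenhuis V (vApp V X) (vApp V Y) i x - vApp V (nijenhuis V X (vApp V Y)) i x
      - vApp V (nijenhuis V (vApp V X) Y) i x + vApp V (vApp V (nijenhuis V X Y)) i x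

namespace HMAux

variable {n : ℕ}

def mO (a : Fin n → Fin n → Fin n → ℝ) (u v : Fin n → ℝ) : Fin n → ℝ :=
  fun k => ∑ j, ∑ l, a k j l * u l * v j

def mU (d : Fin n → Fin n → Fin n → Fin n → ℝ) (e u v : Fin n → ℝ) : Fin n → ℝ :=
  fun k => ∑ s, ∑ j, ∑ l, e s * d k j l s * u l * v j

def dirD (dw : Fin n → Fin n → ℝ) (u : Fin n → ℝ) : Fin n → ℝ :=
  fun i => ∑ s, u s * dw i s

abbrev I5 (n : ℕ) := Fin n × Fin n × Fin n × Fin n × Fin n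

lemma nest5 (f : Fin n → Fin n → Fin n → Fin n → Fin n → ℝ) :
    (∑ p : I5 n, f p.1 p.2.1 p.2.2.1 p.2.2.2.1 p.2.2.2.2)
      = ∑ a, ∑ b, ∑ c, ∑ d, ∑ e, f a b c d e := by
  simp [Fintype.sum_prod_type]

lemma rot3 {f : Fin n → Fin n → Fin n → ℝ} :
    ∑ a, ∑ b, ∑ c, f a b c = ∑ b, ∑ c, ∑ a, f a b c := by
  rw [Finset.sum_comm]
  exact Finset.sum_congr rfl fun _ _ => Finset.sum_comm

lemma rot4 {f : Fin n → Fin n → Fin n → Fin n → ℝ} :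
    ∑ a, ∑ b, ∑ c, ∑ d, f a b c d = ∑ b, ∑ c, ∑ d, ∑ a, f a b c d := by
  rw [Finset.sum_comm]
  exact Finset.sum_congr rfl fun _ _ => rot3

lemma pd_sum {F : Fin n → (Fin n → ℝ) → ℝ} {s : Fin n} {x : Fin n → ℝ}
    (h : ∀ j, DifferentiableAt ℝ (F j) x) :
    pd (fun y => ∑ j, F j y) s x = ∑ j, pd (F j) s x := by
  unfold pd
  rw [fderiv_fun_sum fun j _ => h j]
  simp

lemma pd_mul {f g : (Fin n → ℝ) → ℝ} {s : Fin n} {x : Fin n → ℝ}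
    (hf : DifferentiableAt ℝ f x) (hg : DifferentiableAt ℝ g x) :
    pd (fun y => f y * g y) s x = f x * pd g s x + g x * pd f s x := by
  unfold pd
  rw [fderiv_fun_mul hf hg]
  simp

lemma pd_congr {f g : (Fin n → ℝ) → ℝ} {s : Fin n} {x : Fin n → ℝ}
    (h : f =ᶠ[nhds x] g) : pd f s x = pd g s x := by
  unfold pd
  rw [Filter.EventuallyEq.fderiv_eq h]

lemma mO_add2 {a : Fin n → Fin n → Fin n → ℝ} {u : Fin n → ℝ} {f g : Fin n → ℝ} {i : Fin n} :
    mO a u (fun j => f j + g j) i = mO a u f i + mO a u g i := by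
  unfold mO
  simp only [mul_add, Finset.sum_add_distrib]

lemma mO_sub2 {a : Fin n → Fin n → Fin n → ℝ} {u : Fin n → ℝ} {f g : Fin n → ℝ} {i : Fin n} :
    mO a u (fun j => f j - g j) i = mO a u f i - mO a u g i := by
  unfold mO
  simp only [mul_sub, Finset.sum_sub_distrib]

lemma mO_congr2 {a : Fin n → Fin n → Fin n → ℝ} {u : Fin n → ℝ} {f g : Fin n → ℝ} {i : Fin n}
    (h : ∀ j, f j = g j) : mO a u f i = mO a u g i := by
  unfold mO
  exact Finset.sum_congr rfl fun j _ => by rw [h j]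

lemma mO_zero2 {a : Fin n → Fin n → Fin n → ℝ} {u : Fin n → ℝ} {f : Fin n → ℝ} {k : Fin n}
    (h : ∀ j, f j = 0) : mO a u f k = 0 := by
  unfold mO
  refine Finset.sum_eq_zero fun j _ => Finset.sum_eq_zero fun l _ => ?_
  rw [h j, mul_zero]

section ops
variable {a : Fin n → Fin n → Fin n → ℝ} {d : Fin n → Fin n → Fin n → Fin n → ℝ}
variable (hsym : ∀ k j l, a k j l = a k l j)
variable (hassoc : ∀ i j k l, ∑ m, a i j m * a m k l = ∑ m, a i k m * a m j l)
variable (hdsym : ∀ k j l s, d k j l s = d k l j s)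

include hsym in
lemma mo_comm (u v : Fin n → ℝ) : mO a u v = mO a v u := by
  funext k
  unfold mO
  rw [Finset.sum_comm]
  exact Finset.sum_congr rfl fun j _ => Finset.sum_congr rfl fun l _ => by
    rw [hsym k j l]; ring

include hdsym in
lemma mu_comm (e u v : Fin n → ℝ) : mU d e u v = mU d e v u := by
  funext k
  unfold mU
  refine Finset.sum_congr rfl fun s _ => ?_
  rw [Finset.sum_comm]
  exact Finset.sum_congr rfl fun j _ => Finset.sum_congr rfl fun l _ => by
    rw [hdsym k j l s]; ring

include hsym hassoc in
lemma mo_left_comm (u v w : Fin n → ℝ) : mO a u (mO a v w) = mO a v (mO a u w) := by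
  funext k
  unfold mO
  have expand : ∀ (u' v' : Fin n → ℝ),
      (∑ j, ∑ l, a k j l * u' l * (∑ p, ∑ q, a j p q * v' q * w p))
        = ∑ l, ∑ p, ∑ q, (∑ j, a k j l * a j p q) * (u' l * (v' q * w p)) := by
    intro u' v'
    have step1 : (∑ j, ∑ l, a k j l * u' l * (∑ p, ∑ q, a j p q * v' q * w p))
        = ∑ j, ∑ l, ∑ p, ∑ q, (a k j l * a j p q) * (u' l * (v' q * w p)) := by
      refine Finset.sum_congr rfl fun j _ => Finset.sum_congr rfl fun l _ => ?_
      rw [Finset.mul_sum]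
      refine Finset.sum_congr rfl fun p _ => ?_
      rw [Finset.mul_sum]
      refine Finset.sum_congr rfl fun q _ => ?_
      ring
    rw [step1, rot4]
    refine Finset.sum_congr rfl fun l _ => Finset.sum_congr rfl fun p _ =>
      Finset.sum_congr rfl fun q _ => ?_
    exact (Finset.sum_mul _ _ _).symm
  have key : ∀ l p q : Fin n, (∑ j, a k j l * a j p q) = ∑ j, a k j q * a j p l := by
    intro l p q
    calc (∑ j, a k j l * a j p q) = ∑ j, a k l j * a j p q :=
          Finset.sum_congr rfl fun j _ => by rw [hsym k j l]
      _ = ∑ j, a k p j * a j l q := hassoc k l p q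
      _ = ∑ j, a k p j * a j q l :=
          Finset.sum_congr rfl fun j _ => by rw [hsym j l q]
      _ = ∑ j, a k q j * a j p l := (hassoc k q p l).symm
      _ = ∑ j, a k j q * a j p l :=
          Finset.sum_congr rfl fun j _ => by rw [← hsym k j q]
  rw [expand u v, expand v u]
  have swap13 : ∀ f : Fin n → Fin n → Fin n → ℝ,
      (∑ a', ∑ b, ∑ c, f a' b c) = ∑ c, ∑ b, ∑ a', f a' b c := by
    intro f
    exact (rot3.trans rot3).trans (Finset.sum_congr rfl fun _ _ => Finset.sum_comm)
  rw [swap13 (fun l p q => (∑ j, a k j l * a j p q) * (v l * (u q * w p)))]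
  refine Finset.sum_congr rfl fun l _ => Finset.sum_congr rfl fun p _ =>
    Finset.sum_congr rfl fun q _ => ?_
  rw [key l p q]
  ring

include hsym hassoc in
lemma mo_assoc (u v w : Fin n → ℝ) : mO a (mO a u v) w = mO a u (mO a v w) := by
  calc mO a (mO a u v) w = mO a w (mO a u v) := mo_comm hsym _ _
    _ = mO a u (mO a w v) := mo_left_comm hsym hassoc w u v
    _ = mO a u (mO a v w) := by rw [mo_comm hsym w v]

end ops

section hmda
variable {a : Fin n → Fin n → Fin n → ℝ} {d : Fin n → Fin n → Fin n → Fin n → ℝ}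

lemma hm_op
    (hhm : ∀ i j k l m : Fin n, (∑ s, (d k j l s * a s i m + d s i m j * a k s l
      - d k i m s * a s j l - d s j l i * a k s m - d s j m l * a k s i
      - d s l i m * a k j s)) = 0)
    (u v w t : Fin n → ℝ) (k : Fin n) :
    mU d (mO a t u) w v k + mO a w (mU d v t u) k - mU d (mO a w v) t u k
      - mO a t (mU d u w v) k - mO a u (mU d w t v) k - mO a (mU d t u w) v k = 0 := by
  have flat1 : mU d (mO a t u) w v k = ∑ s, ∑ j, ∑ l, ∑ i, ∑ m, (u i * v j * w l * t m * (d k j l s * a s i m)) := by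
    unfold mU mO
    refine Finset.sum_congr rfl fun s _ => ?_
    refine Finset.sum_congr rfl fun j _ => ?_
    refine Finset.sum_congr rfl fun l _ => ?_
    simp only [Finset.sum_mul, Finset.mul_sum]
    refine Finset.sum_congr rfl fun i _ => Finset.sum_congr rfl fun m _ => ?_
    ring
  have ro1 : (∑ s, ∑ j, ∑ l, ∑ i, ∑ m, (u i * v j * w l * t m * (d k j l s * a s i m))) = ∑ i, ∑ j, ∑ l, ∑ m, ∑ s, (u i * v j * w l * t m * (d k j l s * a s i m)) := by
    rw [← nest5 (fun p1 p2 p3 p4 p5 => u p4 * v p2 * w p3 * t p5 * (d k p2 p3 p1 * a p1 p4 p5)), ← nest5 (fun p1 p2 p3 p4 p5 => u p1 * v p2 * w p3 * t p4 * (d k p2 p3 p5 * a p5 p1 p4))]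
    exact Fintype.sum_equiv ⟨fun p => (p.2.2.2.1, p.2.1, p.2.2.1, p.2.2.2.2, p.1), fun p => (p.2.2.2.2, p.2.1, p.2.2.1, p.1, p.2.2.2.1), fun p => rfl, fun p => rfl⟩ _ _
      (fun p => by simp only [Equiv.coe_fn_mk])
  have flat2 : mO a w (mU d v t u) k = ∑ s, ∑ l, ∑ j, ∑ i, ∑ m, (u i * v j * w l * t m * (d s i m j * a k s l)) := by
    unfold mU mO
    refine Finset.sum_congr rfl fun s _ => ?_
    refine Finset.sum_congr rfl fun l _ => ?_
    simp only [Finset.sum_mul, Finset.mul_sum]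
    refine Finset.sum_congr rfl fun j _ => Finset.sum_congr rfl fun i _ => Finset.sum_congr rfl fun m _ => ?_
    ring
  have ro2 : (∑ s, ∑ l, ∑ j, ∑ i, ∑ m, (u i * v j * w l * t m * (d s i m j * a k s l))) = ∑ i, ∑ j, ∑ l, ∑ m, ∑ s, (u i * v j * w l * t m * (d s i m j * a k s l)) := by
    rw [← nest5 (fun p1 p2 p3 p4 p5 => u p4 * v p3 * w p2 * t p5 * (d p1 p4 p5 p3 * a k p1 p2)), ← nest5 (fun p1 p2 p3 p4 p5 => u p1 * v p2 * w p3 * t p4 * (d p5 p1 p4 p2 * a k p5 p3))]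
    exact Fintype.sum_equiv ⟨fun p => (p.2.2.2.1, p.2.2.1, p.2.1, p.2.2.2.2, p.1), fun p => (p.2.2.2.2, p.2.2.1, p.2.1, p.1, p.2.2.2.1), fun p => rfl, fun p => rfl⟩ _ _
      (fun p => by simp only [Equiv.coe_fn_mk])
  have flat3 : mU d (mO a w v) t u k = ∑ s, ∑ i, ∑ m, ∑ j, ∑ l, (u i * v j * w l * t m * (d k i m s * a s j l)) := by
    unfold mU mO
    refine Finset.sum_congr rfl fun s _ => ?_
    refine Finset.sum_congr rfl fun i _ => ?_
    refine Finset.sum_congr rfl fun m _ => ?_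
    simp only [Finset.sum_mul, Finset.mul_sum]
    refine Finset.sum_congr rfl fun j _ => Finset.sum_congr rfl fun l _ => ?_
    ring
  have ro3 : (∑ s, ∑ i, ∑ m, ∑ j, ∑ l, (u i * v j * w l * t m * (d k i m s * a s j l))) = ∑ i, ∑ j, ∑ l, ∑ m, ∑ s, (u i * v j * w l * t m * (d k i m s * a s j l)) := by
    rw [← nest5 (fun p1 p2 p3 p4 p5 => u p2 * v p4 * w p5 * t p3 * (d k p2 p3 p1 * a p1 p4 p5)), ← nest5 (fun p1 p2 p3 p4 p5 => u p1 * v p2 * w p3 * t p4 * (d k p1 p4 p5 * a p5 p2 p3))]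
    exact Fintype.sum_equiv ⟨fun p => (p.2.1, p.2.2.2.1, p.2.2.2.2, p.2.2.1, p.1), fun p => (p.2.2.2.2, p.1, p.2.2.2.1, p.2.1, p.2.2.1), fun p => rfl, fun p => rfl⟩ _ _
      (fun p => by simp only [Equiv.coe_fn_mk])
  have flat4 : mO a t (mU d u w v) k = ∑ s, ∑ m, ∑ i, ∑ j, ∑ l, (u i * v j * w l * t m * (d s j l i * a k s m)) := by
    unfold mU mO
    refine Finset.sum_congr rfl fun s _ => ?_
    refine Finset.sum_congr rfl fun m _ => ?_
    simp only [Finset.sum_mul, Finset.mul_sum]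
    refine Finset.sum_congr rfl fun i _ => Finset.sum_congr rfl fun j _ => Finset.sum_congr rfl fun l _ => ?_
    ring
  have ro4 : (∑ s, ∑ m, ∑ i, ∑ j, ∑ l, (u i * v j * w l * t m * (d s j l i * a k s m))) = ∑ i, ∑ j, ∑ l, ∑ m, ∑ s, (u i * v j * w l * t m * (d s j l i * a k s m)) := by
    rw [← nest5 (fun p1 p2 p3 p4 p5 => u p3 * v p4 * w p5 * t p2 * (d p1 p4 p5 p3 * a k p1 p2)), ← nest5 (fun p1 p2 p3 p4 p5 => u p1 * v p2 * w p3 * t p4 * (d p5 p2 p3 p1 * a k p5 p4))]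
    exact Fintype.sum_equiv ⟨fun p => (p.2.2.1, p.2.2.2.1, p.2.2.2.2, p.2.1, p.1), fun p => (p.2.2.2.2, p.2.2.2.1, p.1, p.2.1, p.2.2.1), fun p => rfl, fun p => rfl⟩ _ _
      (fun p => by simp only [Equiv.coe_fn_mk])
  have flat5 : mO a u (mU d w t v) k = ∑ s, ∑ i, ∑ l, ∑ j, ∑ m, (u i * v j * w l * t m * (d s j m l * a k s i)) := by
    unfold mU mO
    refine Finset.sum_congr rfl fun s _ => ?_
    refine Finset.sum_congr rfl fun i _ => ?_
    simp only [Finset.sum_mul, Finset.mul_sum]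
    refine Finset.sum_congr rfl fun l _ => Finset.sum_congr rfl fun j _ => Finset.sum_congr rfl fun m _ => ?_
    ring
  have ro5 : (∑ s, ∑ i, ∑ l, ∑ j, ∑ m, (u i * v j * w l * t m * (d s j m l * a k s i))) = ∑ i, ∑ j, ∑ l, ∑ m, ∑ s, (u i * v j * w l * t m * (d s j m l * a k s i)) := by
    rw [← nest5 (fun p1 p2 p3 p4 p5 => u p2 * v p4 * w p3 * t p5 * (d p1 p4 p5 p3 * a k p1 p2)), ← nest5 (fun p1 p2 p3 p4 p5 => u p1 * v p2 * w p3 * t p4 * (d p5 p2 p4 p3 * a k p5 p1))]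
    exact Fintype.sum_equiv ⟨fun p => (p.2.1, p.2.2.2.1, p.2.2.1, p.2.2.2.2, p.1), fun p => (p.2.2.2.2, p.1, p.2.2.1, p.2.1, p.2.2.2.1), fun p => rfl, fun p => rfl⟩ _ _
      (fun p => by simp only [Equiv.coe_fn_mk])
  have flat6 : mO a (mU d t u w) v k = ∑ j, ∑ s, ∑ m, ∑ l, ∑ i, (u i * v j * w l * t m * (d s l i m * a k j s)) := by
    unfold mU mO
    refine Finset.sum_congr rfl fun j _ => ?_
    refine Finset.sum_congr rfl fun s _ => ?_
    simp only [Finset.sum_mul, Finset.mul_sum]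
    refine Finset.sum_congr rfl fun m _ => Finset.sum_congr rfl fun l _ => Finset.sum_congr rfl fun i _ => ?_
    ring
  have ro6 : (∑ j, ∑ s, ∑ m, ∑ l, ∑ i, (u i * v j * w l * t m * (d s l i m * a k j s))) = ∑ i, ∑ j, ∑ l, ∑ m, ∑ s, (u i * v j * w l * t m * (d s l i m * a k j s)) := by
    rw [← nest5 (fun p1 p2 p3 p4 p5 => u p5 * v p1 * w p4 * t p3 * (d p2 p4 p5 p3 * a k p1 p2)), ← nest5 (fun p1 p2 p3 p4 p5 => u p1 * v p2 * w p3 * t p4 * (d p5 p3 p1 p4 * a k p2 p5))]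
    exact Fintype.sum_equiv ⟨fun p => (p.2.2.2.2, p.1, p.2.2.2.1, p.2.2.1, p.2.1), fun p => (p.2.1, p.2.2.2.2, p.2.2.2.1, p.2.2.1, p.1), fun p => rfl, fun p => rfl⟩ _ _
      (fun p => by simp only [Equiv.coe_fn_mk])
  rw [flat1, flat2, flat3, flat4, flat5, flat6, ro1, ro2, ro3, ro4, ro5, ro6]
  simp only [← Finset.sum_add_distrib, ← Finset.sum_sub_distrib]
  have inner0 : ∀ i j l m : Fin n,
      (∑ s, (u i * v j * w l * t m * (d k j l s * a s i m)
        + u i * v j * w l * t m * (d s i m j * a k s l)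
        - u i * v j * w l * t m * (d k i m s * a s j l)
        - u i * v j * w l * t m * (d s j l i * a k s m)
        - u i * v j * w l * t m * (d s j m l * a k s i)
        - u i * v j * w l * t m * (d s l i m * a k j s))) = 0 := by
    intro i j l m
    have : (∑ s, (u i * v j * w l * t m * (d k j l s * a s i m)
        + u i * v j * w l * t m * (d s i m j * a k s l)
        - u i * v j * w l * t m * (d k i m s * a s j l)
        - u i * v j * w l * t m * (d s j l i * a k s m)
        - u i * v j * w l * t m * (d s j m l * a k s i)
        - u i * v j * w l * t m * (d s l i m * a k j s)))
        = u i * v j * w l * t m * (∑ s, (d k j l s * a s i m + d s i m j * a k s l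
            - d k i m s * a s j l - d s j l i * a k s m - d s j m l * a k s i
            - d s l i m * a k j s)) := by
      rw [Finset.mul_sum]
      exact Finset.sum_congr rfl fun s _ => by ring
    rw [this, hhm i j k l m, mul_zero]
  calc (∑ i, ∑ j, ∑ l, ∑ m, ∑ s, (u i * v j * w l * t m * (d k j l s * a s i m)
        + u i * v j * w l * t m * (d s i m j * a k s l)
        - u i * v j * w l * t m * (d k i m s * a s j l)
        - u i * v j * w l * t m * (d s j l i * a k s m)
        - u i * v j * w l * t m * (d s j m l * a k s i)
        - u i * v j * w l * t m * (d s l i m * a k j s)))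
      = ∑ i, ∑ j, ∑ l, ∑ m, (0:ℝ) := by
        exact Finset.sum_congr rfl fun i _ => Finset.sum_congr rfl fun j _ =>
          Finset.sum_congr rfl fun l _ => Finset.sum_congr rfl fun m _ => inner0 i j l m
    _ = 0 := by simp


lemma da_op
    (hda : ∀ i j c l s : Fin n, (∑ m, (d i j m s * a m c l + a i j m * d m c l s
      - d i c m s * a m j l - a i c m * d m j l s)) = 0)
    (e v w t : Fin n → ℝ) (k : Fin n) :
    mU d e (mO a t w) v k + mO a (mU d e t w) v k - mU d e (mO a t v) w k
      - mO a (mU d e t v) w k = 0 := by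
  have flat1 : mU d e (mO a t w) v k = ∑ s, ∑ j, ∑ m, ∑ c, ∑ l, (e s * v j * w c * t l * (d k j m s * a m c l)) := by
    unfold mU mO
    refine Finset.sum_congr rfl fun s _ => ?_
    refine Finset.sum_congr rfl fun j _ => ?_
    refine Finset.sum_congr rfl fun m _ => ?_
    simp only [Finset.sum_mul, Finset.mul_sum]
    refine Finset.sum_congr rfl fun c _ => Finset.sum_congr rfl fun l _ => ?_
    ring
  have ro1 : (∑ s, ∑ j, ∑ m, ∑ c, ∑ l, (e s * v j * w c * t l * (d k j m s * a m c l))) = ∑ j, ∑ c, ∑ l, ∑ s, ∑ m, (e s * v j * w c * t l * (d k j m s * a m c l)) := by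
    rw [← nest5 (fun p1 p2 p3 p4 p5 => e p1 * v p2 * w p4 * t p5 * (d k p2 p3 p1 * a p3 p4 p5)), ← nest5 (fun p1 p2 p3 p4 p5 => e p4 * v p1 * w p2 * t p3 * (d k p1 p5 p4 * a p5 p2 p3))]
    exact Fintype.sum_equiv ⟨fun p => (p.2.1, p.2.2.2.1, p.2.2.2.2, p.1, p.2.2.1), fun p => (p.2.2.2.1, p.1, p.2.2.2.2, p.2.1, p.2.2.1), fun p => rfl, fun p => rfl⟩ _ _
      (fun p => by simp only [Equiv.coe_fn_mk])
  have flat2 : mO a (mU d e t w) v k = ∑ j, ∑ m, ∑ s, ∑ c, ∑ l, (e s * v j * w c * t l * (a k j m * d m c l s)) := by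
    unfold mU mO
    refine Finset.sum_congr rfl fun j _ => ?_
    refine Finset.sum_congr rfl fun m _ => ?_
    simp only [Finset.sum_mul, Finset.mul_sum]
    refine Finset.sum_congr rfl fun s _ => Finset.sum_congr rfl fun c _ => Finset.sum_congr rfl fun l _ => ?_
    ring
  have ro2 : (∑ j, ∑ m, ∑ s, ∑ c, ∑ l, (e s * v j * w c * t l * (a k j m * d m c l s))) = ∑ j, ∑ c, ∑ l, ∑ s, ∑ m, (e s * v j * w c * t l * (a k j m * d m c l s)) := by
    rw [← nest5 (fun p1 p2 p3 p4 p5 => e p3 * v p1 * w p4 * t p5 * (a k p1 p2 * d p2 p4 p5 p3)), ← nest5 (fun p1 p2 p3 p4 p5 => e p4 * v p1 * w p2 * t p3 * (a k p1 p5 * d p5 p2 p3 p4))]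
    exact Fintype.sum_equiv ⟨fun p => (p.1, p.2.2.2.1, p.2.2.2.2, p.2.2.1, p.2.1), fun p => (p.1, p.2.2.2.2, p.2.2.2.1, p.2.1, p.2.2.1), fun p => rfl, fun p => rfl⟩ _ _
      (fun p => by simp only [Equiv.coe_fn_mk])
  have flat3 : mU d e (mO a t v) w k = ∑ s, ∑ c, ∑ m, ∑ j, ∑ l, (e s * v j * w c * t l * (d k c m s * a m j l)) := by
    unfold mU mO
    refine Finset.sum_congr rfl fun s _ => ?_
    refine Finset.sum_congr rfl fun c _ => ?_
    refine Finset.sum_congr rfl fun m _ => ?_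
    simp only [Finset.sum_mul, Finset.mul_sum]
    refine Finset.sum_congr rfl fun j _ => Finset.sum_congr rfl fun l _ => ?_
    ring
  have ro3 : (∑ s, ∑ c, ∑ m, ∑ j, ∑ l, (e s * v j * w c * t l * (d k c m s * a m j l))) = ∑ j, ∑ c, ∑ l, ∑ s, ∑ m, (e s * v j * w c * t l * (d k c m s * a m j l)) := by
    rw [← nest5 (fun p1 p2 p3 p4 p5 => e p1 * v p4 * w p2 * t p5 * (d k p2 p3 p1 * a p3 p4 p5)), ← nest5 (fun p1 p2 p3 p4 p5 => e p4 * v p1 * w p2 * t p3 * (d k p2 p5 p4 * a p5 p1 p3))]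
    exact Fintype.sum_equiv ⟨fun p => (p.2.2.2.1, p.2.1, p.2.2.2.2, p.1, p.2.2.1), fun p => (p.2.2.2.1, p.2.1, p.2.2.2.2, p.1, p.2.2.1), fun p => rfl, fun p => rfl⟩ _ _
      (fun p => by simp only [Equiv.coe_fn_mk])
  have flat4 : mO a (mU d e t v) w k = ∑ c, ∑ m, ∑ s, ∑ j, ∑ l, (e s * v j * w c * t l * (a k c m * d m j l s)) := by
    unfold mU mO
    refine Finset.sum_congr rfl fun c _ => ?_
    refine Finset.sum_congr rfl fun m _ => ?_
    simp only [Finset.sum_mul, Finset.mul_sum]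
    refine Finset.sum_congr rfl fun s _ => Finset.sum_congr rfl fun j _ => Finset.sum_congr rfl fun l _ => ?_
    ring
  have ro4 : (∑ c, ∑ m, ∑ s, ∑ j, ∑ l, (e s * v j * w c * t l * (a k c m * d m j l s))) = ∑ j, ∑ c, ∑ l, ∑ s, ∑ m, (e s * v j * w c * t l * (a k c m * d m j l s)) := by
    rw [← nest5 (fun p1 p2 p3 p4 p5 => e p3 * v p4 * w p1 * t p5 * (a k p1 p2 * d p2 p4 p5 p3)), ← nest5 (fun p1 p2 p3 p4 p5 => e p4 * v p1 * w p2 * t p3 * (a k p2 p5 * d p5 p1 p3 p4))]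
    exact Fintype.sum_equiv ⟨fun p => (p.2.2.2.1, p.1, p.2.2.2.2, p.2.2.1, p.2.1), fun p => (p.2.1, p.2.2.2.2, p.2.2.2.1, p.1, p.2.2.1), fun p => rfl, fun p => rfl⟩ _ _
      (fun p => by simp only [Equiv.coe_fn_mk])
  rw [flat1, flat2, flat3, flat4, ro1, ro2, ro3, ro4]
  simp only [← Finset.sum_add_distrib, ← Finset.sum_sub_distrib]
  have inner0 : ∀ j c l s : Fin n,
      (∑ m, (e s * v j * w c * t l * (d k j m s * a m c l)
        + e s * v j * w c * t l * (a k j m * d m c l s)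
        - e s * v j * w c * t l * (d k c m s * a m j l)
        - e s * v j * w c * t l * (a k c m * d m j l s))) = 0 := by
    intro j c l s
    have : (∑ m, (e s * v j * w c * t l * (d k j m s * a m c l)
        + e s * v j * w c * t l * (a k j m * d m c l s)
        - e s * v j * w c * t l * (d k c m s * a m j l)
        - e s * v j * w c * t l * (a k c m * d m j l s)))
        = e s * v j * w c * t l * (∑ m, (d k j m s * a m c l + a k j m * d m c l s
            - d k c m s * a m j l - a k c m * d m j l s)) := by
      rw [Finset.mul_sum]
      exact Finset.sum_congr rfl fun m _ => by ring
    rw [this, hda k j c l s, mul_zero]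
  calc (∑ j, ∑ c, ∑ l, ∑ s, ∑ m, (e s * v j * w c * t l * (d k j m s * a m c l)
        + e s * v j * w c * t l * (a k j m * d m c l s)
        - e s * v j * w c * t l * (d k c m s * a m j l)
        - e s * v j * w c * t l * (a k c m * d m j l s)))
      = ∑ j, ∑ c, ∑ l, ∑ s, (0:ℝ) :=
        Finset.sum_congr rfl fun j _ => Finset.sum_congr rfl fun c _ =>
          Finset.sum_congr rfl fun l _ => Finset.sum_congr rfl fun s _ => inner0 j c l s
    _ = 0 := by simp


lemma mo_hm_op
    (hhm : ∀ i j k l m : Fin n, (∑ s, (d k j l s * a s i m + d s i m j * a k s l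
      - d k i m s * a s j l - d s j l i * a k s m - d s j m l * a k s i
      - d s l i m * a k j s)) = 0)
    (s0 u v w t : Fin n → ℝ) (k : Fin n) :
    mO a s0 (mU d (mO a t u) w v) k + mO a s0 (mO a w (mU d v t u)) k
      - mO a s0 (mU d (mO a w v) t u) k - mO a s0 (mO a t (mU d u w v)) k
      - mO a s0 (mO a u (mU d w t v)) k - mO a s0 (mO a (mU d t u w) v) k = 0 := by
  rw [← mO_add2, ← mO_sub2, ← mO_sub2, ← mO_sub2, ← mO_sub2]
  exact mO_zero2 fun j => hm_op hhm u v w t j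
end hmda

variable {c : SC n} {Z W : VF n} {x : Fin n → ℝ}


lemma val_vApp (W : VF n) (i : Fin n) :
    vApp (VZ c Z) W i x
      = mO (fun i' j l => c i' j l x) (fun l => Z l x) (fun j => W j x) i := by
  unfold vApp VZ mO
  exact Finset.sum_congr rfl fun j _ => by rw [Finset.sum_mul]

lemma diff_VZ (hc : ∀ j l, DifferentiableAt ℝ (c i j l) x)
    (hZ : ∀ l, DifferentiableAt ℝ (Z l) x) (j : Fin n) :
    DifferentiableAt ℝ (fun y => VZ c Z i j y) x := by
  unfold VZ
  exact DifferentiableAt.fun_sum fun l _ => (hc j l).mul (hZ l)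

lemma pd_vApp {i : Fin n} (hc : ∀ j l, DifferentiableAt ℝ (c i j l) x)
    (hZ : ∀ l, DifferentiableAt ℝ (Z l) x)
    (hW : ∀ j, DifferentiableAt ℝ (W j) x) (s : Fin n) :
    pd (vApp (VZ c Z) W i) s x
      = ∑ j, ∑ l, (pd (c i j l) s x * Z l x * W j x
          + c i j l x * pd (Z l) s x * W j x
          + c i j l x * Z l x * pd (W j) s x) := by
  have h0 : vApp (VZ c Z) W i = fun y => ∑ j, (fun y' => VZ c Z i j y' * W j y') y := rfl
  rw [h0, pd_sum fun j => (diff_VZ hc hZ j).fun_mul (hW j)]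
  refine Finset.sum_congr rfl fun j _ => ?_
  rw [pd_mul (diff_VZ hc hZ j) (hW j)]
  have h1 : pd (fun y => VZ c Z i j y) s x
      = ∑ l, (c i j l x * pd (Z l) s x + Z l x * pd (c i j l) s x) := by
    have h2 : (fun y => VZ c Z i j y) = fun y => ∑ l, (fun y' => c i j l y' * Z l y') y := rfl
    rw [h2, pd_sum fun l => (hc j l).fun_mul (hZ l)]
    exact Finset.sum_congr rfl fun l _ => pd_mul (hc j l) (hZ l)
  rw [h1]
  have h3 : VZ c Z i j x = ∑ l, c i j l x * Z l x := rfl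
  rw [h3, Finset.sum_mul, Finset.mul_sum, ← Finset.sum_add_distrib]
  exact Finset.sum_congr rfl fun l _ => by ring

lemma dir_pd {i : Fin n} (hc : ∀ j l, DifferentiableAt ℝ (c i j l) x)
    (hZ : ∀ l, DifferentiableAt ℝ (Z l) x)
    (hW : ∀ j, DifferentiableAt ℝ (W j) x) (u : Fin n → ℝ) :
    (∑ s, u s * pd (vApp (VZ c Z) W i) s x)
      = mU (fun i' j l s => pd (c i' j l) s x) u (fun l => Z l x) (fun j => W j x) i
        + mO (fun i' j l => c i' j l x) (dirD (fun l s => pd (Z l) s x) u) (fun j => W j x) i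
        + mO (fun i' j l => c i' j l x) (fun l => Z l x) (dirD (fun j s => pd (W j) s x) u) i := by
  have h0 : (∑ s, u s * pd (vApp (VZ c Z) W i) s x)
      = ∑ s, ∑ j, ∑ l, (u s * (pd (c i j l) s x * Z l x * W j x)
          + u s * (c i j l x * pd (Z l) s x * W j x)
          + u s * (c i j l x * Z l x * pd (W j) s x)) := by
    refine Finset.sum_congr rfl fun s _ => ?_
    rw [pd_vApp hc hZ hW s, Finset.mul_sum]
    refine Finset.sum_congr rfl fun j _ => ?_
    rw [Finset.mul_sum]
    exact Finset.sum_congr rfl fun l _ => by ring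
  rw [h0]
  simp only [Finset.sum_add_distrib]
  congr 1
  · congr 1
    · -- first piece = mU
      unfold mU
      exact Finset.sum_congr rfl fun s _ => Finset.sum_congr rfl fun j _ =>
        Finset.sum_congr rfl fun l _ => by ring
    · -- second piece = mO with dirD dz
      unfold mO dirD
      rw [rot3 (f := fun s j l => u s * (c i j l x * pd (Z l) s x * W j x))]
      refine Finset.sum_congr rfl fun j _ => Finset.sum_congr rfl fun l _ => ?_
      rw [Finset.mul_sum, Finset.sum_mul]
      exact Finset.sum_congr rfl fun s _ => by ring
  · unfold mO dirD
    rw [rot3 (f := fun s j l => u s * (c i j l x * Z l x * pd (W j) s x))]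
    refine Finset.sum_congr rfl fun j _ => Finset.sum_congr rfl fun l _ => ?_
    rw [Finset.mul_sum]
    exact Finset.sum_congr rfl fun s _ => by ring



lemma lieB_val {P Q : VF n} {i : Fin n} :
    lieB P Q i x = dirD (fun r s => pd (Q r) s x) (fun j => P j x) i
      - dirD (fun r s => pd (P r) s x) (fun j => Q j x) i := by
  unfold lieB dirD
  rw [Finset.sum_sub_distrib]

lemma nij_eq {P Q : VF n}
    (hc : ∀ i j l, DifferentiableAt ℝ (c i j l) x)
    (hZ : ∀ l, DifferentiableAt ℝ (Z l) x)
    (hP : ∀ j, DifferentiableAt ℝ (P j) x)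
    (hQ : ∀ j, DifferentiableAt ℝ (Q j) x) (i : Fin n) :
    nijenhuis (VZ c Z) P Q i x =
      (mU (fun i' j l s => pd (c i' j l) s x)
          (mO (fun i' j l => c i' j l x) (fun l => Z l x) (fun j => P j x))
          (fun l => Z l x) (fun j => Q j x) i
        - mU (fun i' j l s => pd (c i' j l) s x)
          (mO (fun i' j l => c i' j l x) (fun l => Z l x) (fun j => Q j x))
          (fun l => Z l x) (fun j => P j x) i)
      + (mO (fun i' j l => c i' j l x)
          (dirD (fun l s => pd (Z l) s x)
            (mO (fun i' j l => c i' j l x) (fun l => Z l x) (fun j => P j x)))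
          (fun j => Q j x) i
        - mO (fun i' j l => c i' j l x)
          (dirD (fun l s => pd (Z l) s x)
            (mO (fun i' j l => c i' j l x) (fun l => Z l x) (fun j => Q j x)))
          (fun j => P j x) i)
      - (mO (fun i' j l => c i' j l x) (fun l => Z l x)
          (mU (fun i' j l s => pd (c i' j l) s x) (fun j => P j x) (fun l => Z l x)
            (fun j => Q j x)) i
        - mO (fun i' j l => c i' j l x) (fun l => Z l x)
          (mU (fun i' j l s => pd (c i' j l) s x) (fun j => Q j x) (fun l => Z l x)
            (fun j => P j x)) i)
      - (mO (fun i' j l => c i' j l x) (fun l => Z l x)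
          (mO (fun i' j l => c i' j l x) (dirD (fun l s => pd (Z l) s x) (fun j => P j x))
            (fun j => Q j x)) i
        - mO (fun i' j l => c i' j l x) (fun l => Z l x)
          (mO (fun i' j l => c i' j l x) (dirD (fun l s => pd (Z l) s x) (fun j => Q j x))
            (fun j => P j x)) i) := by
  set A := fun i' j l => c i' j l x with hAdef
  set dA := fun i' j l s => pd (c i' j l) s x with hdAdef
  set zv := fun l => Z l x with hzvdef
  set dz := fun l s => pd (Z l) s x with hdzdef
  set Pv := fun j => P j x with hPvdef
  set Qv := fun j => Q j x with hQvdef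
  set dP := fun (r s : Fin n) => pd (P r) s x with hdPdef
  set dQ := fun (r s : Fin n) => pd (Q r) s x with hdQdef
  have hcc : ∀ (i : Fin n) (j l : Fin n), DifferentiableAt ℝ (c i j l) x := hc
  -- value bridges
  have hvP : ∀ s, vApp (VZ c Z) P s x = mO A zv Pv s := fun s => val_vApp P s
  have hvQ : ∀ s, vApp (VZ c Z) Q s x = mO A zv Qv s := fun s => val_vApp Q s
  have hdirP : ∀ (u : Fin n → ℝ) (r : Fin n), (∑ s, u s * pd (vApp (VZ c Z) P r) s x)
      = mU dA u zv Pv r + mO A (dirD dz u) Pv r + mO A zv (dirD dP u) r :=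
    fun u r => dir_pd (fun j l => hcc r j l) hZ hP u
  have hdirQ : ∀ (u : Fin n → ℝ) (r : Fin n), (∑ s, u s * pd (vApp (VZ c Z) Q r) s x)
      = mU dA u zv Qv r + mO A (dirD dz u) Qv r + mO A zv (dirD dQ u) r :=
    fun u r => dir_pd (fun j l => hcc r j l) hZ hQ u
  -- t1
  have ht1 : lieB (vApp (VZ c Z) P) (vApp (VZ c Z) Q) i x
      = (mU dA (mO A zv Pv) zv Qv i + mO A (dirD dz (mO A zv Pv)) Qv i
          + mO A zv (dirD dQ (mO A zv Pv)) i)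
        - (mU dA (mO A zv Qv) zv Pv i + mO A (dirD dz (mO A zv Qv)) Pv i
          + mO A zv (dirD dP (mO A zv Qv)) i) := by
    have : lieB (vApp (VZ c Z) P) (vApp (VZ c Z) Q) i x
        = (∑ s, mO A zv Pv s * pd (vApp (VZ c Z) Q i) s x)
          - (∑ s, mO A zv Qv s * pd (vApp (VZ c Z) P i) s x) := by
      unfold lieB
      rw [Finset.sum_sub_distrib]
      congr 1
      · exact Finset.sum_congr rfl fun s _ => by rw [hvP s]
      · exact Finset.sum_congr rfl fun s _ => by rw [hvQ s]
    rw [this, hdirQ (mO A zv Pv) i, hdirP (mO A zv Qv) i]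
  -- t2
  have hinner2 : ∀ j, lieB P (vApp (VZ c Z) Q) j x
      = (mU dA Pv zv Qv j + mO A (dirD dz Pv) Qv j + mO A zv (dirD dQ Pv) j)
        - dirD dP (mO A zv Qv) j := by
    intro j
    have : lieB P (vApp (VZ c Z) Q) j x
        = (∑ s, Pv s * pd (vApp (VZ c Z) Q j) s x)
          - (∑ s, mO A zv Qv s * dP j s) := by
      unfold lieB
      rw [Finset.sum_sub_distrib]
      congr 1
      exact Finset.sum_congr rfl fun s _ => by rw [hvQ s]
    rw [this, hdirQ Pv j]
    rfl
  have ht2 : vApp (VZ c Z) (lieB P (vApp (VZ c Z) Q)) i x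
      = mO A zv (mU dA Pv zv Qv) i + mO A zv (mO A (dirD dz Pv) Qv) i
        + mO A zv (mO A zv (dirD dQ Pv)) i - mO A zv (dirD dP (mO A zv Qv)) i := by
    rw [val_vApp (lieB P (vApp (VZ c Z) Q)) i]
    rw [mO_congr2 (u := zv) (i := i) hinner2]
    rw [mO_sub2 (f := fun j => mU dA Pv zv Qv j + mO A (dirD dz Pv) Qv j + mO A zv (dirD dQ Pv) j)
      (g := fun j => dirD dP (mO A zv Qv) j)]
    rw [mO_add2 (f := fun j => mU dA Pv zv Qv j + mO A (dirD dz Pv) Qv j)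
      (g := fun j => mO A zv (dirD dQ Pv) j)]
    rw [mO_add2 (f := fun j => mU dA Pv zv Qv j) (g := fun j => mO A (dirD dz Pv) Qv j)]
  -- t3
  have hinner3 : ∀ j, lieB (vApp (VZ c Z) P) Q j x
      = dirD dQ (mO A zv Pv) j
        - (mU dA Qv zv Pv j + mO A (dirD dz Qv) Pv j + mO A zv (dirD dP Qv) j) := by
    intro j
    have : lieB (vApp (VZ c Z) P) Q j x
        = (∑ s, mO A zv Pv s * dQ j s)
          - (∑ s, Qv s * pd (vApp (VZ c Z) P j) s x) := by
      unfold lieB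
      rw [Finset.sum_sub_distrib]
      congr 1
      exact Finset.sum_congr rfl fun s _ => by rw [hvP s]
    rw [this, hdirP Qv j]
    rfl
  have ht3 : vApp (VZ c Z) (lieB (vApp (VZ c Z) P) Q) i x
      = mO A zv (dirD dQ (mO A zv Pv)) i
        - (mO A zv (mU dA Qv zv Pv) i + mO A zv (mO A (dirD dz Qv) Pv) i
          + mO A zv (mO A zv (dirD dP Qv)) i) := by
    rw [val_vApp (lieB (vApp (VZ c Z) P) Q) i]
    rw [mO_congr2 (u := zv) (i := i) hinner3]
    rw [mO_sub2 (f := fun j => dirD dQ (mO A zv Pv) j)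
      (g := fun j => mU dA Qv zv Pv j + mO A (dirD dz Qv) Pv j + mO A zv (dirD dP Qv) j)]
    congr 1
    rw [mO_add2 (f := fun j => mU dA Qv zv Pv j + mO A (dirD dz Qv) Pv j)
      (g := fun j => mO A zv (dirD dP Qv) j)]
    rw [mO_add2 (f := fun j => mU dA Qv zv Pv j) (g := fun j => mO A (dirD dz Qv) Pv j)]
  -- t4
  have hinner4 : ∀ j, vApp (VZ c Z) (lieB P Q) j x
      = mO A zv (dirD dQ Pv) j - mO A zv (dirD dP Qv) j := by
    intro j
    rw [val_vApp (lieB P Q) j]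
    rw [mO_congr2 (u := zv) (i := j) (fun r => lieB_val (P := P) (Q := Q))]
    exact mO_sub2
  have ht4 : vApp (VZ c Z) (vApp (VZ c Z) (lieB P Q)) i x
      = mO A zv (mO A zv (dirD dQ Pv)) i - mO A zv (mO A zv (dirD dP Qv)) i := by
    rw [val_vApp (vApp (VZ c Z) (lieB P Q)) i]
    rw [mO_congr2 (u := zv) (i := i) hinner4]
    exact mO_sub2
  show lieB (vApp (VZ c Z) P) (vApp (VZ c Z) Q) i x
      - vApp (VZ c Z) (lieB P (vApp (VZ c Z) Q)) i x
      - vApp (VZ c Z) (lieB (vApp (VZ c Z) P) Q) i x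
      + vApp (VZ c Z) (vApp (VZ c Z) (lieB P Q)) i x = _
  rw [ht1, ht2, ht3, ht4]
  ring


end HMAux

theorem statement_0 {n : ℕ} (U : Set (Fin n → ℝ)) (hU : IsOpen U)
    (c : SC n)
    (hc_smooth : ∀ i j k, ContDiffOn ℝ (⊤ : ℕ∞) (c i j k) U)
    (hc_comm : ∀ i j k, ∀ x ∈ U, c i j k x = c i k j x)
    (hc_assoc : ∀ i j k l, ∀ x ∈ U,
      ∑ m, c i j m x * c m k l x = ∑ m, c i k m x * c m j l x)
    (hHM : ∀ i j k l m, ∀ x ∈ U,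
      ∑ s, (pd (c k j l) s x * c s i m x + pd (c s i m) j x * c k s l x
        - pd (c k i m) s x * c s j l x - pd (c s j l) i x * c k s m x
        - pd (c s j m) l x * c k s i x - pd (c s l i) m x * c k j s x) = 0)
    (Z : VF n) (hZ : ∀ i, ContDiffOn ℝ (⊤ : ℕ∞) (Z i) U)
    (X : VF n) (hX : ∀ i, ContDiffOn ℝ (⊤ : ℕ∞) (X i) U)
    (Y : VF n) (hY : ∀ i, ContDiffOn ℝ (⊤ : ℕ∞) (Y i) U) :
    ∀ x ∈ U, ∀ i, haantjes (VZ c Z) X Y i x = 0 := by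
  intro x hx i
  have hmem := hU.mem_nhds hx
  have hcd : ∀ i' j l, DifferentiableAt ℝ (c i' j l) x := fun i' j l =>
    ((hc_smooth i' j l).differentiableOn (by simp)).differentiableAt hmem
  have hZd : ∀ l, DifferentiableAt ℝ (Z l) x := fun l =>
    ((hZ l).differentiableOn (by simp)).differentiableAt hmem
  have hXd : ∀ l, DifferentiableAt ℝ (X l) x := fun l =>
    ((hX l).differentiableOn (by simp)).differentiableAt hmem
  have hYd : ∀ l, DifferentiableAt ℝ (Y l) x := fun l =>
    ((hY l).differentiableOn (by simp)).differentiableAt hmem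
  have hVXd : ∀ j, DifferentiableAt ℝ (vApp (VZ c Z) X j) x := by
    intro j
    show DifferentiableAt ℝ (fun y => ∑ r, VZ c Z j r y * X r y) x
    exact DifferentiableAt.fun_sum fun r _ =>
      (HMAux.diff_VZ (fun p q => hcd j p q) hZd r).mul (hXd r)
  have hVYd : ∀ j, DifferentiableAt ℝ (vApp (VZ c Z) Y j) x := by
    intro j
    show DifferentiableAt ℝ (fun y => ∑ r, VZ c Z j r y * Y r y) x
    exact DifferentiableAt.fun_sum fun r _ =>
      (HMAux.diff_VZ (fun p q => hcd j p q) hZd r).mul (hYd r)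
  -- coordinate relations at x
  have comm_a : ∀ k j l, (fun i' j l => c i' j l x) k j l = (fun i' j l => c i' j l x) k l j := fun k j l => hc_comm k j l x hx
  have assoc_a : ∀ i' j k l, ∑ m, (fun i' j l => c i' j l x) i' j m * (fun i' j l => c i' j l x) m k l = ∑ m, (fun i' j l => c i' j l x) i' k m * (fun i' j l => c i' j l x) m j l :=
    fun i' j k l => hc_assoc i' j k l x hx
  have dcomm : ∀ k j l s, (fun i' j l s => pd (c i' j l) s x) k j l s = (fun i' j l s => pd (c i' j l) s x) k l j s := by
    intro k j l s
    exact HMAux.pd_congr (Filter.eventuallyEq_of_mem hmem fun y hy => hc_comm k j l y hy)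
  have hhm' : ∀ i' j k l m : Fin n, (∑ s, ((fun i' j l s => pd (c i' j l) s x) k j l s * (fun i' j l => c i' j l x) s i' m + (fun i' j l s => pd (c i' j l) s x) s i' m j * (fun i' j l => c i' j l x) k s l
      - (fun i' j l s => pd (c i' j l) s x) k i' m s * (fun i' j l => c i' j l x) s j l - (fun i' j l s => pd (c i' j l) s x) s j l i' * (fun i' j l => c i' j l x) k s m - (fun i' j l s => pd (c i' j l) s x) s j m l * (fun i' j l => c i' j l x) k s i'
      - (fun i' j l s => pd (c i' j l) s x) s l i' m * (fun i' j l => c i' j l x) k j s)) = 0 := fun i' j k l m => hHM i' j k l m x hx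
  have hdassoc : ∀ i' j k l s : Fin n, (∑ m, ((fun i' j l s => pd (c i' j l) s x) i' j m s * (fun i' j l => c i' j l x) m k l + (fun i' j l => c i' j l x) i' j m * (fun i' j l s => pd (c i' j l) s x) m k l s
      - (fun i' j l s => pd (c i' j l) s x) i' k m s * (fun i' j l => c i' j l x) m j l - (fun i' j l => c i' j l x) i' k m * (fun i' j l s => pd (c i' j l) s x) m j l s)) = 0 := by
    intro i' j k l s
    have h1 : pd (fun y => ∑ m, c i' j m y * c m k l y) s x
        = ∑ m, (c i' j m x * pd (c m k l) s x + c m k l x * pd (c i' j m) s x) := by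
      have h0 : (fun y => ∑ m, c i' j m y * c m k l y)
          = fun y => ∑ m, (fun y' => c i' j m y' * c m k l y') y := rfl
      rw [h0, HMAux.pd_sum fun m => (hcd i' j m).fun_mul (hcd m k l)]
      exact Finset.sum_congr rfl fun m _ => HMAux.pd_mul (hcd i' j m) (hcd m k l)
    have h2 : pd (fun y => ∑ m, c i' k m y * c m j l y) s x
        = ∑ m, (c i' k m x * pd (c m j l) s x + c m j l x * pd (c i' k m) s x) := by
      have h0 : (fun y => ∑ m, c i' k m y * c m j l y)
          = fun y => ∑ m, (fun y' => c i' k m y' * c m j l y') y := rfl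
      rw [h0, HMAux.pd_sum fun m => (hcd i' k m).fun_mul (hcd m j l)]
      exact Finset.sum_congr rfl fun m _ => HMAux.pd_mul (hcd i' k m) (hcd m j l)
    have h3 : pd (fun y => ∑ m, c i' j m y * c m k l y) s x
        = pd (fun y => ∑ m, c i' k m y * c m j l y) s x :=
      HMAux.pd_congr (Filter.eventuallyEq_of_mem hmem fun y hy => hc_assoc i' j k l y hy)
    have h4 : (∑ m, ((fun i' j l s => pd (c i' j l) s x) i' j m s * (fun i' j l => c i' j l x) m k l + (fun i' j l => c i' j l x) i' j m * (fun i' j l s => pd (c i' j l) s x) m k l s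
        - (fun i' j l s => pd (c i' j l) s x) i' k m s * (fun i' j l => c i' j l x) m j l - (fun i' j l => c i' j l x) i' k m * (fun i' j l s => pd (c i' j l) s x) m j l s))
        = (∑ m, (c i' j m x * pd (c m k l) s x + c m k l x * pd (c i' j m) s x))
          - (∑ m, (c i' k m x * pd (c m j l) s x + c m j l x * pd (c i' k m) s x)) := by
      rw [← Finset.sum_sub_distrib]
      exact Finset.sum_congr rfl fun m _ => by ring
    rw [h4, ← h1, ← h2, h3, sub_self]
  -- op-level relations
  have hcommF : ∀ u v, HMAux.mO (fun i' j l => c i' j l x) u v = HMAux.mO (fun i' j l => c i' j l x) v u :=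
    fun u v => HMAux.mo_comm comm_a u v
  have hlcommF : ∀ u v w, HMAux.mO (fun i' j l => c i' j l x) u (HMAux.mO (fun i' j l => c i' j l x) v w) = HMAux.mO (fun i' j l => c i' j l x) v (HMAux.mO (fun i' j l => c i' j l x) u w) :=
    fun u v w => HMAux.mo_left_comm comm_a assoc_a u v w
  have hassocF : ∀ u v w, HMAux.mO (fun i' j l => c i' j l x) (HMAux.mO (fun i' j l => c i' j l x) u v) w = HMAux.mO (fun i' j l => c i' j l x) u (HMAux.mO (fun i' j l => c i' j l x) v w) :=
    fun u v w => HMAux.mo_assoc comm_a assoc_a u v w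
  have hmuF : ∀ e u v, HMAux.mU (fun i' j l s => pd (c i' j l) s x) e u v = HMAux.mU (fun i' j l s => pd (c i' j l) s x) e v u :=
    fun e u v => HMAux.mu_comm dcomm e u v
  have hm0 : ∀ u v w t k, HMAux.mU (fun i' j l s => pd (c i' j l) s x) (HMAux.mO (fun i' j l => c i' j l x) t u) w v k
      + HMAux.mO (fun i' j l => c i' j l x) w (HMAux.mU (fun i' j l s => pd (c i' j l) s x) v t u) k
      - HMAux.mU (fun i' j l s => pd (c i' j l) s x) (HMAux.mO (fun i' j l => c i' j l x) w v) t u k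
      - HMAux.mO (fun i' j l => c i' j l x) t (HMAux.mU (fun i' j l s => pd (c i' j l) s x) u w v) k
      - HMAux.mO (fun i' j l => c i' j l x) u (HMAux.mU (fun i' j l s => pd (c i' j l) s x) w t v) k
      - HMAux.mO (fun i' j l => c i' j l x) (HMAux.mU (fun i' j l s => pd (c i' j l) s x) t u w) v k = 0 :=
    fun u v w t k => HMAux.hm_op hhm' u v w t k
  have da0 : ∀ e v w t k, HMAux.mU (fun i' j l s => pd (c i' j l) s x) e (HMAux.mO (fun i' j l => c i' j l x) t w) v k
      + HMAux.mO (fun i' j l => c i' j l x) (HMAux.mU (fun i' j l s => pd (c i' j l) s x) e t w) v k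
      - HMAux.mU (fun i' j l s => pd (c i' j l) s x) e (HMAux.mO (fun i' j l => c i' j l x) t v) w k
      - HMAux.mO (fun i' j l => c i' j l x) (HMAux.mU (fun i' j l s => pd (c i' j l) s x) e t v) w k = 0 :=
    fun e v w t k => HMAux.da_op hdassoc e v w t k
  have mohm0 : ∀ s0 u v w t k, HMAux.mO (fun i' j l => c i' j l x) s0 (HMAux.mU (fun i' j l s => pd (c i' j l) s x) (HMAux.mO (fun i' j l => c i' j l x) t u) w v) k
      + HMAux.mO (fun i' j l => c i' j l x) s0 (HMAux.mO (fun i' j l => c i' j l x) w (HMAux.mU (fun i' j l s => pd (c i' j l) s x) v t u)) k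
      - HMAux.mO (fun i' j l => c i' j l x) s0 (HMAux.mU (fun i' j l s => pd (c i' j l) s x) (HMAux.mO (fun i' j l => c i' j l x) w v) t u) k
      - HMAux.mO (fun i' j l => c i' j l x) s0 (HMAux.mO (fun i' j l => c i' j l x) t (HMAux.mU (fun i' j l s => pd (c i' j l) s x) u w v)) k
      - HMAux.mO (fun i' j l => c i' j l x) s0 (HMAux.mO (fun i' j l => c i' j l x) u (HMAux.mU (fun i' j l s => pd (c i' j l) s x) w t v)) k
      - HMAux.mO (fun i' j l => c i' j l x) s0 (HMAux.mO (fun i' j l => c i' j l x) (HMAux.mU (fun i' j l s => pd (c i' j l) s x) t u w) v) k = 0 :=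
    fun s0 u v w t k => HMAux.mo_hm_op hhm' s0 u v w t k
  -- value bridges
  have hfunX : (fun j => vApp (VZ c Z) X j x) = HMAux.mO (fun i' j l => c i' j l x) (fun l => Z l x) (fun j => X j x) :=
    funext fun j => HMAux.val_vApp X j
  have hfunY : (fun j => vApp (VZ c Z) Y j x) = HMAux.mO (fun i' j l => c i' j l x) (fun l => Z l x) (fun j => Y j x) :=
    funext fun j => HMAux.val_vApp Y j
  -- the four Nijenhuis evaluations
  have hnij1 : nijenhuis (VZ c Z) (vApp (VZ c Z) X) (vApp (VZ c Z) Y) i x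
      = ((HMAux.mU (fun i' j l s => pd (c i' j l) s x) (HMAux.mO (fun i' j l => c i' j l x) (fun l => Z l x) (HMAux.mO (fun i' j l => c i' j l x) (fun l => Z l x) (fun j => X j x))) (fun l => Z l x) (HMAux.mO (fun i' j l => c i' j l x) (fun l => Z l x) (fun j => Y j x)) i
        - HMAux.mU (fun i' j l s => pd (c i' j l) s x) (HMAux.mO (fun i' j l => c i' j l x) (fun l => Z l x) (HMAux.mO (fun i' j l => c i' j l x) (fun l => Z l x) (fun j => Y j x))) (fun l => Z l x) (HMAux.mO (fun i' j l => c i' j l x) (fun l => Z l x) (fun j => X j x)) i)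
      + (HMAux.mO (fun i' j l => c i' j l x) (HMAux.dirD (fun l s => pd (Z l) s x) (HMAux.mO (fun i' j l => c i' j l x) (fun l => Z l x) (HMAux.mO (fun i' j l => c i' j l x) (fun l => Z l x) (fun j => X j x)))) (HMAux.mO (fun i' j l => c i' j l x) (fun l => Z l x) (fun j => Y j x)) i
        - HMAux.mO (fun i' j l => c i' j l x) (HMAux.dirD (fun l s => pd (Z l) s x) (HMAux.mO (fun i' j l => c i' j l x) (fun l => Z l x) (HMAux.mO (fun i' j l => c i' j l x) (fun l => Z l x) (fun j => Y j x)))) (HMAux.mO (fun i' j l => c i' j l x) (fun l => Z l x) (fun j => X j x)) i)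
      - (HMAux.mO (fun i' j l => c i' j l x) (fun l => Z l x) (HMAux.mU (fun i' j l s => pd (c i' j l) s x) (HMAux.mO (fun i' j l => c i' j l x) (fun l => Z l x) (fun j => X j x)) (fun l => Z l x) (HMAux.mO (fun i' j l => c i' j l x) (fun l => Z l x) (fun j => Y j x))) i
        - HMAux.mO (fun i' j l => c i' j l x) (fun l => Z l x) (HMAux.mU (fun i' j l s => pd (c i' j l) s x) (HMAux.mO (fun i' j l => c i' j l x) (fun l => Z l x) (fun j => Y j x)) (fun l => Z l x) (HMAux.mO (fun i' j l => c i' j l x) (fun l => Z l x) (fun j => X j x))) i)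
      - (HMAux.mO (fun i' j l => c i' j l x) (fun l => Z l x) (HMAux.mO (fun i' j l => c i' j l x) (HMAux.dirD (fun l s => pd (Z l) s x) (HMAux.mO (fun i' j l => c i' j l x) (fun l => Z l x) (fun j => X j x))) (HMAux.mO (fun i' j l => c i' j l x) (fun l => Z l x) (fun j => Y j x))) i
        - HMAux.mO (fun i' j l => c i' j l x) (fun l => Z l x) (HMAux.mO (fun i' j l => c i' j l x) (HMAux.dirD (fun l s => pd (Z l) s x) (HMAux.mO (fun i' j l => c i' j l x) (fun l => Z l x) (fun j => Y j x))) (HMAux.mO (fun i' j l => c i' j l x) (fun l => Z l x) (fun j => X j x))) i)) := by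
    rw [HMAux.nij_eq hcd hZd hVXd hVYd i, hfunX, hfunY]
  have hnij2 : ∀ j, nijenhuis (VZ c Z) X (vApp (VZ c Z) Y) j x
      = ((HMAux.mU (fun i' j l s => pd (c i' j l) s x) (HMAux.mO (fun i' j l => c i' j l x) (fun l => Z l x) (fun j => X j x)) (fun l => Z l x) (HMAux.mO (fun i' j l => c i' j l x) (fun l => Z l x) (fun j => Y j x)) j
        - HMAux.mU (fun i' j l s => pd (c i' j l) s x) (HMAux.mO (fun i' j l => c i' j l x) (fun l => Z l x) (HMAux.mO (fun i' j l => c i' j l x) (fun l => Z l x) (fun j => Y j x))) (fun l => Z l x) (fun j => X j x) j)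
      + (HMAux.mO (fun i' j l => c i' j l x) (HMAux.dirD (fun l s => pd (Z l) s x) (HMAux.mO (fun i' j l => c i' j l x) (fun l => Z l x) (fun j => X j x))) (HMAux.mO (fun i' j l => c i' j l x) (fun l => Z l x) (fun j => Y j x)) j
        - HMAux.mO (fun i' j l => c i' j l x) (HMAux.dirD (fun l s => pd (Z l) s x) (HMAux.mO (fun i' j l => c i' j l x) (fun l => Z l x) (HMAux.mO (fun i' j l => c i' j l x) (fun l => Z l x) (fun j => Y j x)))) (fun j => X j x) j)
      - (HMAux.mO (fun i' j l => c i' j l x) (fun l => Z l x) (HMAux.mU (fun i' j l s => pd (c i' j l) s x) (fun j => X j x) (fun l => Z l x) (HMAux.mO (fun i' j l => c i' j l x) (fun l => Z l x) (fun j => Y j x))) j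
        - HMAux.mO (fun i' j l => c i' j l x) (fun l => Z l x) (HMAux.mU (fun i' j l s => pd (c i' j l) s x) (HMAux.mO (fun i' j l => c i' j l x) (fun l => Z l x) (fun j => Y j x)) (fun l => Z l x) (fun j => X j x)) j)
      - (HMAux.mO (fun i' j l => c i' j l x) (fun l => Z l x) (HMAux.mO (fun i' j l => c i' j l x) (HMAux.dirD (fun l s => pd (Z l) s x) (fun j => X j x)) (HMAux.mO (fun i' j l => c i' j l x) (fun l => Z l x) (fun j => Y j x))) j
        - HMAux.mO (fun i' j l => c i' j l x) (fun l => Z l x) (HMAux.mO (fun i' j l => c i' j l x) (HMAux.dirD (fun l s => pd (Z l) s x) (HMAux.mO (fun i' j l => c i' j l x) (fun l => Z l x) (fun j => Y j x))) (fun j => X j x)) j)) := by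
    intro j
    rw [HMAux.nij_eq hcd hZd hXd hVYd j, hfunY]
  have hnij3 : ∀ j, nijenhuis (VZ c Z) (vApp (VZ c Z) X) Y j x
      = ((HMAux.mU (fun i' j l s => pd (c i' j l) s x) (HMAux.mO (fun i' j l => c i' j l x) (fun l => Z l x) (HMAux.mO (fun i' j l => c i' j l x) (fun l => Z l x) (fun j => X j x))) (fun l => Z l x) (fun j => Y j x) j
        - HMAux.mU (fun i' j l s => pd (c i' j l) s x) (HMAux.mO (fun i' j l => c i' j l x) (fun l => Z l x) (fun j => Y j x)) (fun l => Z l x) (HMAux.mO (fun i' j l => c i' j l x) (fun l => Z l x) (fun j => X j x)) j)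
      + (HMAux.mO (fun i' j l => c i' j l x) (HMAux.dirD (fun l s => pd (Z l) s x) (HMAux.mO (fun i' j l => c i' j l x) (fun l => Z l x) (HMAux.mO (fun i' j l => c i' j l x) (fun l => Z l x) (fun j => X j x)))) (fun j => Y j x) j
        - HMAux.mO (fun i' j l => c i' j l x) (HMAux.dirD (fun l s => pd (Z l) s x) (HMAux.mO (fun i' j l => c i' j l x) (fun l => Z l x) (fun j => Y j x))) (HMAux.mO (fun i' j l => c i' j l x) (fun l => Z l x) (fun j => X j x)) j)
      - (HMAux.mO (fun i' j l => c i' j l x) (fun l => Z l x) (HMAux.mU (fun i' j l s => pd (c i' j l) s x) (HMAux.mO (fun i' j l => c i' j l x) (fun l => Z l x) (fun j => X j x)) (fun l => Z l x) (fun j => Y j x)) j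
        - HMAux.mO (fun i' j l => c i' j l x) (fun l => Z l x) (HMAux.mU (fun i' j l s => pd (c i' j l) s x) (fun j => Y j x) (fun l => Z l x) (HMAux.mO (fun i' j l => c i' j l x) (fun l => Z l x) (fun j => X j x))) j)
      - (HMAux.mO (fun i' j l => c i' j l x) (fun l => Z l x) (HMAux.mO (fun i' j l => c i' j l x) (HMAux.dirD (fun l s => pd (Z l) s x) (HMAux.mO (fun i' j l => c i' j l x) (fun l => Z l x) (fun j => X j x))) (fun j => Y j x)) j
        - HMAux.mO (fun i' j l => c i' j l x) (fun l => Z l x) (HMAux.mO (fun i' j l => c i' j l x) (HMAux.dirD (fun l s => pd (Z l) s x) (fun j => Y j x)) (HMAux.mO (fun i' j l => c i' j l x) (fun l => Z l x) (fun j => X j x))) j)) := by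
    intro j
    rw [HMAux.nij_eq hcd hZd hVXd hYd j, hfunX]
  have hnij4 : ∀ j, nijenhuis (VZ c Z) X Y j x
      = ((HMAux.mU (fun i' j l s => pd (c i' j l) s x) (HMAux.mO (fun i' j l => c i' j l x) (fun l => Z l x) (fun j => X j x)) (fun l => Z l x) (fun j => Y j x) j
        - HMAux.mU (fun i' j l s => pd (c i' j l) s x) (HMAux.mO (fun i' j l => c i' j l x) (fun l => Z l x) (fun j => Y j x)) (fun l => Z l x) (fun j => X j x) j)
      + (HMAux.mO (fun i' j l => c i' j l x) (HMAux.dirD (fun l s => pd (Z l) s x) (HMAux.mO (fun i' j l => c i' j l x) (fun l => Z l x) (fun j => X j x))) (fun j => Y j x) j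
        - HMAux.mO (fun i' j l => c i' j l x) (HMAux.dirD (fun l s => pd (Z l) s x) (HMAux.mO (fun i' j l => c i' j l x) (fun l => Z l x) (fun j => Y j x))) (fun j => X j x) j)
      - (HMAux.mO (fun i' j l => c i' j l x) (fun l => Z l x) (HMAux.mU (fun i' j l s => pd (c i' j l) s x) (fun j => X j x) (fun l => Z l x) (fun j => Y j x)) j
        - HMAux.mO (fun i' j l => c i' j l x) (fun l => Z l x) (HMAux.mU (fun i' j l s => pd (c i' j l) s x) (fun j => Y j x) (fun l => Z l x) (fun j => X j x)) j)
      - (HMAux.mO (fun i' j l => c i' j l x) (fun l => Z l x) (HMAux.mO (fun i' j l => c i' j l x) (HMAux.dirD (fun l s => pd (Z l) s x) (fun j => X j x)) (fun j => Y j x)) j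
        - HMAux.mO (fun i' j l => c i' j l x) (fun l => Z l x) (HMAux.mO (fun i' j l => c i' j l x) (HMAux.dirD (fun l s => pd (Z l) s x) (fun j => Y j x)) (fun j => X j x)) j)) := by
    intro j
    rw [HMAux.nij_eq hcd hZd hXd hYd j]
  show nijenhuis (VZ c Z) (vApp (VZ c Z) X) (vApp (VZ c Z) Y) i x
      - vApp (VZ c Z) (nijenhuis (VZ c Z) X (vApp (VZ c Z) Y)) i x
      - vApp (VZ c Z) (nijenhuis (VZ c Z) (vApp (VZ c Z) X) Y) i x
      + vApp (VZ c Z) (vApp (VZ c Z) (nijenhuis (VZ c Z) X Y)) i x = 0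
  rw [hnij1]
  rw [HMAux.val_vApp (nijenhuis (VZ c Z) X (vApp (VZ c Z) Y)) i,
    HMAux.mO_congr2 (i := i) hnij2]
  rw [HMAux.val_vApp (nijenhuis (VZ c Z) (vApp (VZ c Z) X) Y) i,
    HMAux.mO_congr2 (i := i) hnij3]
  rw [HMAux.val_vApp (vApp (VZ c Z) (nijenhuis (VZ c Z) X Y)) i,
    HMAux.mO_congr2 (i := i) (fun j => HMAux.val_vApp (nijenhuis (VZ c Z) X Y) j),
    HMAux.mO_congr2 (i := i) (fun j => HMAux.mO_congr2 (i := j) hnij4)]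
  simp only [HMAux.mO_add2, HMAux.mO_sub2]
  linear_combination (norm := (simp only [hcommF, hlcommF, hassocF, hmuF]; ring1))
    (1/8 : ℝ) * (hm0 (HMAux.mO (fun i' j l => c i' j l x) (fun l => Z l x) (HMAux.mO (fun i' j l => c i' j l x) (fun l => Z l x) (fun l => Z l x))) (fun l => Z l x) (fun j => X j x) (fun j => Y j x) i)
      + (1/4 : ℝ) * (da0 (HMAux.mO (fun i' j l => c i' j l x) (fun l => Z l x) (HMAux.mO (fun i' j l => c i' j l x) (fun l => Z l x) (fun l => Z l x))) (fun l => Z l x) (fun j => X j x) (fun j => Y j x) i)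
      + (-1/8 : ℝ) * (hm0 (HMAux.mO (fun i' j l => c i' j l x) (fun l => Z l x) (HMAux.mO (fun i' j l => c i' j l x) (fun l => Z l x) (fun l => Z l x))) (fun l => Z l x) (fun j => Y j x) (fun j => X j x) i)
      + (-1/4 : ℝ) * (da0 (HMAux.mO (fun i' j l => c i' j l x) (fun l => Z l x) (HMAux.mO (fun i' j l => c i' j l x) (fun l => Z l x) (fun l => Z l x))) (fun l => Z l x) (fun j => Y j x) (fun j => X j x) i)
      + (1/2 : ℝ) * (hm0 (HMAux.mO (fun i' j l => c i' j l x) (fun l => Z l x) (fun l => Z l x)) (HMAux.mO (fun i' j l => c i' j l x) (fun l => Z l x) (fun l => Z l x)) (fun j => X j x) (fun j => Y j x) i)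
      + (1 : ℝ) * (da0 (HMAux.mO (fun i' j l => c i' j l x) (fun l => Z l x) (fun l => Z l x)) (HMAux.mO (fun i' j l => c i' j l x) (fun l => Z l x) (fun l => Z l x)) (fun j => X j x) (fun j => Y j x) i)
      + (-1/2 : ℝ) * (hm0 (HMAux.mO (fun i' j l => c i' j l x) (fun l => Z l x) (fun l => Z l x)) (HMAux.mO (fun i' j l => c i' j l x) (fun l => Z l x) (fun l => Z l x)) (fun j => Y j x) (fun j => X j x) i)
      + (-1 : ℝ) * (da0 (HMAux.mO (fun i' j l => c i' j l x) (fun l => Z l x) (fun l => Z l x)) (HMAux.mO (fun i' j l => c i' j l x) (fun l => Z l x) (fun l => Z l x)) (fun j => Y j x) (fun j => X j x) i)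
      + (1/2 : ℝ) * (hm0 (HMAux.mO (fun i' j l => c i' j l x) (fun l => Z l x) (HMAux.mO (fun i' j l => c i' j l x) (fun l => Z l x) (fun j => X j x))) (fun l => Z l x) (fun l => Z l x) (fun j => Y j x) i)
      + (-1/8 : ℝ) * (hm0 (HMAux.mO (fun i' j l => c i' j l x) (fun l => Z l x) (fun l => Z l x)) (HMAux.mO (fun i' j l => c i' j l x) (fun l => Z l x) (fun j => X j x)) (fun l => Z l x) (fun j => Y j x) i)
      + (-1/4 : ℝ) * (hm0 (HMAux.mO (fun i' j l => c i' j l x) (fun l => Z l x) (fun l => Z l x)) (fun l => Z l x) (HMAux.mO (fun i' j l => c i' j l x) (fun l => Z l x) (fun j => X j x)) (fun j => Y j x) i)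
      + (-1/2 : ℝ) * (hm0 (HMAux.mO (fun i' j l => c i' j l x) (fun l => Z l x) (HMAux.mO (fun i' j l => c i' j l x) (fun l => Z l x) (fun j => Y j x))) (fun l => Z l x) (fun l => Z l x) (fun j => X j x) i)
      + (1/8 : ℝ) * (hm0 (HMAux.mO (fun i' j l => c i' j l x) (fun l => Z l x) (fun l => Z l x)) (HMAux.mO (fun i' j l => c i' j l x) (fun l => Z l x) (fun j => Y j x)) (fun l => Z l x) (fun j => X j x) i)
      + (1/4 : ℝ) * (hm0 (HMAux.mO (fun i' j l => c i' j l x) (fun l => Z l x) (fun l => Z l x)) (fun l => Z l x) (HMAux.mO (fun i' j l => c i' j l x) (fun l => Z l x) (fun j => Y j x)) (fun j => X j x) i)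
      + (-1 : ℝ) * (da0 (HMAux.mO (fun i' j l => c i' j l x) (fun l => Z l x) (HMAux.mO (fun i' j l => c i' j l x) (fun l => Z l x) (fun j => X j x))) (fun l => Z l x) (fun j => Y j x) (fun l => Z l x) i)
      + (5/8 : ℝ) * (hm0 (HMAux.mO (fun i' j l => c i' j l x) (fun l => Z l x) (fun l => Z l x)) (HMAux.mO (fun i' j l => c i' j l x) (fun l => Z l x) (fun j => X j x)) (fun j => Y j x) (fun l => Z l x) i)
      + (1 : ℝ) * (da0 (HMAux.mO (fun i' j l => c i' j l x) (fun l => Z l x) (HMAux.mO (fun i' j l => c i' j l x) (fun l => Z l x) (fun j => Y j x))) (fun l => Z l x) (fun j => X j x) (fun l => Z l x) i)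
      + (-5/8 : ℝ) * (hm0 (HMAux.mO (fun i' j l => c i' j l x) (fun l => Z l x) (fun l => Z l x)) (HMAux.mO (fun i' j l => c i' j l x) (fun l => Z l x) (fun j => Y j x)) (fun j => X j x) (fun l => Z l x) i)
      + (1/2 : ℝ) * (hm0 (HMAux.mO (fun i' j l => c i' j l x) (fun l => Z l x) (fun l => Z l x)) (fun j => X j x) (HMAux.mO (fun i' j l => c i' j l x) (fun l => Z l x) (fun j => Y j x)) (fun l => Z l x) i)
      + (-1/2 : ℝ) * (hm0 (HMAux.mO (fun i' j l => c i' j l x) (fun l => Z l x) (fun l => Z l x)) (fun j => Y j x) (HMAux.mO (fun i' j l => c i' j l x) (fun l => Z l x) (fun j => X j x)) (fun l => Z l x) i)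
      + (1/8 : ℝ) * (hm0 (fun l => Z l x) (HMAux.mO (fun i' j l => c i' j l x) (fun l => Z l x) (HMAux.mO (fun i' j l => c i' j l x) (fun l => Z l x) (fun l => Z l x))) (fun j => X j x) (fun j => Y j x) i)
      + (1/4 : ℝ) * (da0 (fun l => Z l x) (HMAux.mO (fun i' j l => c i' j l x) (fun l => Z l x) (HMAux.mO (fun i' j l => c i' j l x) (fun l => Z l x) (fun l => Z l x))) (fun j => X j x) (fun j => Y j x) i)
      + (-1/8 : ℝ) * (hm0 (fun l => Z l x) (HMAux.mO (fun i' j l => c i' j l x) (fun l => Z l x) (HMAux.mO (fun i' j l => c i' j l x) (fun l => Z l x) (fun l => Z l x))) (fun j => Y j x) (fun j => X j x) i)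
      + (-1/4 : ℝ) * (da0 (fun l => Z l x) (HMAux.mO (fun i' j l => c i' j l x) (fun l => Z l x) (HMAux.mO (fun i' j l => c i' j l x) (fun l => Z l x) (fun l => Z l x))) (fun j => Y j x) (fun j => X j x) i)
      + (1/8 : ℝ) * (hm0 (HMAux.mO (fun i' j l => c i' j l x) (fun l => Z l x) (fun j => X j x)) (HMAux.mO (fun i' j l => c i' j l x) (fun l => Z l x) (fun l => Z l x)) (fun l => Z l x) (fun j => Y j x) i)
      + (1 : ℝ) * (da0 (fun l => Z l x) (HMAux.mO (fun i' j l => c i' j l x) (fun l => Z l x) (HMAux.mO (fun i' j l => c i' j l x) (fun l => Z l x) (fun j => X j x))) (fun l => Z l x) (fun j => Y j x) i)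
      + (1/4 : ℝ) * (hm0 (fun l => Z l x) (HMAux.mO (fun i' j l => c i' j l x) (fun l => Z l x) (fun l => Z l x)) (HMAux.mO (fun i' j l => c i' j l x) (fun l => Z l x) (fun j => X j x)) (fun j => Y j x) i)
      + (-1 : ℝ) * (da0 (fun l => Z l x) (HMAux.mO (fun i' j l => c i' j l x) (fun l => Z l x) (fun l => Z l x)) (HMAux.mO (fun i' j l => c i' j l x) (fun l => Z l x) (fun j => X j x)) (fun j => Y j x) i)
      + (-1/8 : ℝ) * (hm0 (HMAux.mO (fun i' j l => c i' j l x) (fun l => Z l x) (fun j => Y j x)) (HMAux.mO (fun i' j l => c i' j l x) (fun l => Z l x) (fun l => Z l x)) (fun l => Z l x) (fun j => X j x) i)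
      + (-1 : ℝ) * (da0 (fun l => Z l x) (HMAux.mO (fun i' j l => c i' j l x) (fun l => Z l x) (HMAux.mO (fun i' j l => c i' j l x) (fun l => Z l x) (fun j => Y j x))) (fun l => Z l x) (fun j => X j x) i)
      + (-1/4 : ℝ) * (hm0 (fun l => Z l x) (HMAux.mO (fun i' j l => c i' j l x) (fun l => Z l x) (fun l => Z l x)) (HMAux.mO (fun i' j l => c i' j l x) (fun l => Z l x) (fun j => Y j x)) (fun j => X j x) i)
      + (1 : ℝ) * (da0 (fun l => Z l x) (HMAux.mO (fun i' j l => c i' j l x) (fun l => Z l x) (fun l => Z l x)) (HMAux.mO (fun i' j l => c i' j l x) (fun l => Z l x) (fun j => Y j x)) (fun j => X j x) i)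
      + (-3/8 : ℝ) * (hm0 (HMAux.mO (fun i' j l => c i' j l x) (fun l => Z l x) (fun j => X j x)) (HMAux.mO (fun i' j l => c i' j l x) (fun l => Z l x) (fun l => Z l x)) (fun j => Y j x) (fun l => Z l x) i)
      + (1/4 : ℝ) * (da0 (HMAux.mO (fun i' j l => c i' j l x) (fun l => Z l x) (fun j => X j x)) (HMAux.mO (fun i' j l => c i' j l x) (fun l => Z l x) (fun l => Z l x)) (fun j => Y j x) (fun l => Z l x) i)
      + (-1/2 : ℝ) * (hm0 (fun l => Z l x) (HMAux.mO (fun i' j l => c i' j l x) (fun l => Z l x) (HMAux.mO (fun i' j l => c i' j l x) (fun l => Z l x) (fun j => X j x))) (fun j => Y j x) (fun l => Z l x) i)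
      + (3/8 : ℝ) * (hm0 (HMAux.mO (fun i' j l => c i' j l x) (fun l => Z l x) (fun j => Y j x)) (HMAux.mO (fun i' j l => c i' j l x) (fun l => Z l x) (fun l => Z l x)) (fun j => X j x) (fun l => Z l x) i)
      + (-1/4 : ℝ) * (da0 (HMAux.mO (fun i' j l => c i' j l x) (fun l => Z l x) (fun j => Y j x)) (HMAux.mO (fun i' j l => c i' j l x) (fun l => Z l x) (fun l => Z l x)) (fun j => X j x) (fun l => Z l x) i)
      + (1/2 : ℝ) * (hm0 (fun l => Z l x) (HMAux.mO (fun i' j l => c i' j l x) (fun l => Z l x) (HMAux.mO (fun i' j l => c i' j l x) (fun l => Z l x) (fun j => Y j x))) (fun j => X j x) (fun l => Z l x) i)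
      + (-1/4 : ℝ) * (da0 (fun l => Z l x) (HMAux.mO (fun i' j l => c i' j l x) (fun l => Z l x) (fun l => Z l x)) (fun j => X j x) (HMAux.mO (fun i' j l => c i' j l x) (fun l => Z l x) (fun j => Y j x)) i)
      + (1/4 : ℝ) * (da0 (fun l => Z l x) (HMAux.mO (fun i' j l => c i' j l x) (fun l => Z l x) (fun l => Z l x)) (fun j => Y j x) (HMAux.mO (fun i' j l => c i' j l x) (fun l => Z l x) (fun j => X j x)) i)
      + (1/4 : ℝ) * (hm0 (HMAux.mO (fun i' j l => c i' j l x) (fun l => Z l x) (fun j => X j x)) (fun l => Z l x) (HMAux.mO (fun i' j l => c i' j l x) (fun l => Z l x) (fun l => Z l x)) (fun j => Y j x) i)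
      + (-1/4 : ℝ) * (hm0 (HMAux.mO (fun i' j l => c i' j l x) (fun l => Z l x) (fun j => Y j x)) (fun l => Z l x) (HMAux.mO (fun i' j l => c i' j l x) (fun l => Z l x) (fun l => Z l x)) (fun j => X j x) i)
      + (1 : ℝ) * (hm0 (HMAux.mO (fun i' j l => c i' j l x) (fun l => Z l x) (fun j => X j x)) (HMAux.mO (fun i' j l => c i' j l x) (fun l => Z l x) (fun j => Y j x)) (fun l => Z l x) (fun l => Z l x) i)
      + (-1 : ℝ) * (hm0 (HMAux.mO (fun i' j l => c i' j l x) (fun l => Z l x) (fun j => Y j x)) (HMAux.mO (fun i' j l => c i' j l x) (fun l => Z l x) (fun j => X j x)) (fun l => Z l x) (fun l => Z l x) i)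
      + (-1/2 : ℝ) * (hm0 (fun l => Z l x) (fun j => X j x) (HMAux.mO (fun i' j l => c i' j l x) (fun l => Z l x) (HMAux.mO (fun i' j l => c i' j l x) (fun l => Z l x) (fun l => Z l x))) (fun j => Y j x) i)
      + (1/2 : ℝ) * (hm0 (fun l => Z l x) (fun j => Y j x) (HMAux.mO (fun i' j l => c i' j l x) (fun l => Z l x) (HMAux.mO (fun i' j l => c i' j l x) (fun l => Z l x) (fun l => Z l x))) (fun j => X j x) i)
      + (-1/2 : ℝ) * (hm0 (fun j => X j x) (HMAux.mO (fun i' j l => c i' j l x) (fun l => Z l x) (HMAux.mO (fun i' j l => c i' j l x) (fun l => Z l x) (fun l => Z l x))) (fun l => Z l x) (fun j => Y j x) i)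
      + (1/2 : ℝ) * (hm0 (fun j => Y j x) (HMAux.mO (fun i' j l => c i' j l x) (fun l => Z l x) (HMAux.mO (fun i' j l => c i' j l x) (fun l => Z l x) (fun l => Z l x))) (fun l => Z l x) (fun j => X j x) i)
      + (-1/2 : ℝ) * (mohm0 (HMAux.mO (fun i' j l => c i' j l x) (fun l => Z l x) (fun l => Z l x)) (fun l => Z l x) (fun l => Z l x) (fun j => X j x) (fun j => Y j x) i)
      + (1/2 : ℝ) * (mohm0 (HMAux.mO (fun i' j l => c i' j l x) (fun l => Z l x) (fun l => Z l x)) (fun l => Z l x) (fun l => Z l x) (fun j => Y j x) (fun j => X j x) i)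
end
end

section
/- Let c^i_{jk} (i,j,k = 1,…,n) be real numbers symmetric in (j,k) and associative, i.e. c^i_{jm} c^m_{kl} = c^i_{km} c^m_{jl} (sum over repeated indices). Suppose X ∈ ℝ^n and v^1,…,v^n ∈ ℝ are pairwise distinct with c^i_{jk} X^k = v^i δ^i_j for all i,j. Then c^i_{pq}(v^i − v^p) = 0 for all i,p,q, and consequently c^i_{pq} = 0 unless i = p = q. -/
/-!
Let `L p = mulMatrix c p` be the matrix `(c^i_{pm})_{i,m}` of multiplication by `e_p`.
Associativity says exactly that the `L p` commute, and commutativity turns the eigenvector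
hypothesis into `∑ₖ Xᵏ L k = diag v`. Hence every `L p` commutes with `diag v`, which forces
`c^i_{pq} (v^i - v^q) = 0`; by the symmetry of `c` the same holds with `v^p` in place of `v^q`,
and distinctness of the `v^i` kills every `c^i_{pq}` off the diagonal `i = p = q`.
-/

open Matrix

namespace Matrix

theorem mul_sub_eq_zero_of_commute_diagonal {ι R : Type*} [Fintype ι] [DecidableEq ι]
    [CommRing R] {d : ι → R} {M : Matrix ι ι R} (h : Commute (diagonal d) M) (i j : ι) :
    M i j * (d i - d j) = 0 := by
  have hij := congr_fun₂ h.eq i j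
  rw [diagonal_mul, mul_diagonal] at hij
  linear_combination hij

end Matrix

namespace StructureConstants

variable {ι R : Type*} [Fintype ι] [CommRing R] (c : ι → ι → ι → R)

def mulMatrix (p : ι) : Matrix ι ι R :=
  of fun i m => c i p m

theorem mulMatrix_commute
    (hassoc : ∀ i j k l, ∑ m, c i j m * c m k l = ∑ m, c i k m * c m j l) (p q : ι) :
    Commute (mulMatrix c p) (mulMatrix c q) := by
  ext i l
  simpa [mulMatrix, mul_apply] using hassoc i p q l

theorem sum_smul_mulMatrix (hcomm : ∀ i j k, c i j k = c i k j) (X : ι → R) :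
    ∑ k, X k • mulMatrix c k = of fun i j => ∑ k, c i j k * X k := by
  ext i j
  simp only [Matrix.sum_apply, Matrix.smul_apply, mulMatrix, of_apply, smul_eq_mul]
  exact Finset.sum_congr rfl fun k _ => by rw [hcomm i k j, mul_comm]

end StructureConstants

theorem statement_1 {n : ℕ} (c : Fin n → Fin n → Fin n → ℝ)
    (hcomm : ∀ i j k, c i j k = c i k j)
    (hassoc : ∀ i j k l, ∑ m, c i j m * c m k l = ∑ m, c i k m * c m j l)
    (X : Fin n → ℝ) (v : Fin n → ℝ)
    (hdist : ∀ i j, i ≠ j → v i ≠ v j)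
    (heig : ∀ i j, ∑ k, c i j k * X k = if i = j then v i else 0) :
    (∀ i p q, c i p q * (v i - v p) = 0) ∧
      (∀ i p q, ¬(i = p ∧ p = q) → c i p q = 0) := by
  have hdiag : ∑ k, X k • StructureConstants.mulMatrix c k = diagonal v := by
    rw [StructureConstants.sum_smul_mulMatrix c hcomm]
    ext i j
    simp [heig, diagonal_apply]
  have hvq (i p q) : c i p q * (v i - v q) = 0 := by
    have hcommute : Commute (diagonal v) (StructureConstants.mulMatrix c p) := by
      rw [← hdiag]
      exact .sum_left _ _ _ fun k _ =>
        (StructureConstants.mulMatrix_commute c hassoc k p).smul_left _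
    exact mul_sub_eq_zero_of_commute_diagonal hcommute i q
  have hvp (i p q) : c i p q * (v i - v p) = 0 := by
    rw [hcomm]
    exact hvq i q p
  refine ⟨hvp, fun i p q hipq => ?_⟩
  by_cases hip : i = p
  · exact (mul_eq_zero.mp (hvq i p q)).resolve_right
      (sub_ne_zero.mpr (hdist i q fun hiq => hipq ⟨hip, hip ▸ hiq⟩))
  · exact (mul_eq_zero.mp (hvp i p q)).resolve_right (sub_ne_zero.mpr (hdist i p hip))
end

section
/- Let f_1,…,f_n : U → ℝ be smooth functions on an open set U ⊆ ℝ^n, nowhere vanishing, and suppose the structure functions c^i_{jk} = f_i δ^i_j δ^i_k satisfy the Hertling–Manin condition. Then for all j ≠ k, ∂_j f_k = 0 on U; that is, each f_k depends on the coordinate r^k only. -/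
open scoped BigOperators

noncomputable section

lemma pd_zero {n : ℕ} (s : Fin n) (x : Fin n → ℝ) :
    pd (fun _ : Fin n → ℝ => (0:ℝ)) s x = 0 := by
  simp [pd]

theorem statement_2 {n : ℕ} (U : Set (Fin n → ℝ)) (hU : IsOpen U)
    (f : Fin n → (Fin n → ℝ) → ℝ)
    (hf_smooth : ∀ i, ContDiffOn ℝ (⊤ : ℕ∞) (f i) U)
    (hf_ne : ∀ i, ∀ x ∈ U, f i x ≠ 0)
    (c : SC n)
    (hc : ∀ i j k x, c i j k x = if j = i ∧ k = i then f i x else 0)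
    (hHM : ∀ i j k l m, ∀ x ∈ U,
      ∑ s, (pd (c k j l) s x * c s i m x + pd (c s i m) j x * c k s l x
        - pd (c k i m) s x * c s j l x - pd (c s j l) i x * c k s m x
        - pd (c s j m) l x * c k s i x - pd (c s l i) m x * c k j s x) = 0)
    :
    ∀ j k, j ≠ k → ∀ x ∈ U, pd (f k) j x = 0 := by
  intro j k hjk x hx
  have hc0 : ∀ a b d : Fin n, ¬(b = a ∧ d = a) → c a b d = (fun _ => (0:ℝ)) := by
    intro a b d h
    funext y
    rw [hc, if_neg h]
  have hcf : ∀ a : Fin n, c a a a = f a := by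
    intro a
    funext y
    rw [hc, if_pos ⟨rfl, rfl⟩]
  have key := hHM k j k j k x hx
  have hsum : ∀ s : Fin n,
      (pd (c k j j) s x * c s k k x + pd (c s k k) j x * c k s j x
        - pd (c k k k) s x * c s j j x - pd (c s j j) k x * c k s k x
        - pd (c s j k) j x * c k s k x - pd (c s j k) k x * c k j s x)
      = if s = j then -(pd (f k) j x * f j x) else 0 := by
    intro s
    have h1 : c k j j = (fun _ => (0:ℝ)) := hc0 k j j (by rintro ⟨h, -⟩; exact hjk h)
    have h2 : c k s j x = 0 := by rw [hc, if_neg (by rintro ⟨-, h⟩; exact hjk h)]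
    have h3 : c s j k = (fun _ => (0:ℝ)) :=
      hc0 s j k (by rintro ⟨h, h'⟩; exact hjk (h.trans h'.symm))
    rw [h1, h2, h3, hcf k, pd_zero, pd_zero]
    by_cases hs : s = j
    · rw [hs, if_pos rfl, hcf j]
      have h7 : c k j j x = 0 := by rw [h1]
      have h8 : c k j k x = 0 := by rw [hc, if_neg (by rintro ⟨h, -⟩; exact hjk h)]
      rw [h7, h8]
      ring
    · have h4 : c s j j = (fun _ => (0:ℝ)) :=
        hc0 s j j (by rintro ⟨h, -⟩; exact hs h.symm)
      have h5 : c s j j x = 0 := by rw [h4]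
      rw [h5, h4, pd_zero, if_neg hs]
      ring
  rw [Finset.sum_congr rfl (fun s _ => hsum s)] at key
  simp only [Finset.sum_ite_eq', Finset.mem_univ, if_true] at key
  have hfj := hf_ne j x hx
  have : pd (f k) j x * f j x = 0 := by linarith
  exact (mul_eq_zero.mp this).resolve_right hfj
end
end

section
/- Let c^i_{jk} be smooth structure functions on an open set U ⊆ ℝ^n, symmetric in (j,k), satisfying the Hertling–Manin condition, and let e be a smooth vector field which is a unity for the product, i.e. e∘Z = Z for every vector field Z. Then for all smooth vector fields Z, W on U: [e, Z∘W] = [e,Z]∘W + [e,W]∘Z; equivalently, the Lie derivative Lie_e c vanishes. -/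
open scoped BigOperators

noncomputable section

/-- The product `(X ∘ Y)^i = c^i_{jk} X^j Y^k`. -/
def circ {n : ℕ} (c : SC n) (X Y : VF n) : VF n :=
  fun i x => ∑ j, ∑ k, c i j k x * X j x * Y k x

/-- The Lie derivative of `c` along `X`:
`(Lie_X c)^i_{jk} = X^s ∂_s c^i_{jk} − (∂_s X^i) c^s_{jk} + (∂_j X^s) c^i_{sk} + (∂_k X^s) c^i_{js}`. -/
def liec {n : ℕ} (c : SC n) (X : VF n) (i j k : Fin n) (x : Fin n → ℝ) : ℝ :=
  ∑ s, (X s x * pd (c i j k) s x - pd (X i) s x * c s j k x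
    + pd (X s) j x * c i s k x + pd (X s) k x * c i j s x)

section Helpers

variable {n : ℕ}


private lemma sw12 (f : Fin n → Fin n → Fin n → ℝ) :
    (∑ a, ∑ b, ∑ c, f a b c) = ∑ b, ∑ a, ∑ c, f a b c := Finset.sum_comm

private lemma sw23 (f : Fin n → Fin n → Fin n → ℝ) :
    (∑ a, ∑ b, ∑ c, f a b c) = ∑ a, ∑ c, ∑ b, f a b c :=
  Finset.sum_congr rfl fun _ _ => Finset.sum_comm

private lemma rotA (f : Fin n → Fin n → Fin n → ℝ) :
    (∑ a, ∑ b, ∑ c, f a b c) = ∑ a, ∑ b, ∑ c, f c a b :=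
  (sw12 f).trans (sw23 (fun x y z => f y x z))

private lemma rotB (f : Fin n → Fin n → Fin n → ℝ) :
    (∑ a, ∑ b, ∑ c, f a b c) = ∑ a, ∑ b, ∑ c, f b c a :=
  (sw23 f).trans (sw12 (fun x y z => f x z y))

private lemma sw13 (f : Fin n → Fin n → Fin n → ℝ) :
    (∑ a, ∑ b, ∑ c, f a b c) = ∑ a, ∑ b, ∑ c, f c b a :=
  (rotA f).trans (sw12 (fun a b c => f c a b))

private lemma fac (K : ℝ) (f t : Fin n → ℝ) (h : ∀ i, t i = K * f i) :
    (∑ i, t i) = K * ∑ i, f i := by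
  rw [Finset.mul_sum]; exact Finset.sum_congr rfl fun i _ => h i

private lemma col1 (b : Fin n) (f : Fin n → ℝ) : (∑ s, if s = b then f s else 0) = f b := by simp

private lemma col2 (b : Fin n) (f : Fin n → ℝ) : (∑ s, if b = s then f s else 0) = f b := by simp


private lemma core_alg (C : Fin n → Fin n → Fin n → ℝ) (DC : Fin n → Fin n → Fin n → Fin n → ℝ)
    (E : Fin n → ℝ) (DE : Fin n → Fin n → ℝ)
    (hCs : ∀ i j k, C i j k = C i k j)
    (hDCs : ∀ p i j k, DC p i j k = DC p i k j)
    (hF1 : ∀ i k, (∑ j, C i j k * E j) = if i = k then 1 else 0)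
    (hG1 : ∀ p i k, (∑ j, (DC p i j k * E j + C i j k * DE p j)) = 0)
    (hHM : ∀ i j k l m, (∑ s, (DC s k j l * C s i m + DC j s i m * C k s l
        - DC s k i m * C s j l - DC i s j l * C k s m
        - DC l s j m * C k s i - DC m s l i * C k j s)) = 0) :
    ∀ k l m, (∑ s, (E s * DC s k l m - DE s k * C s l m + DE l s * C k s m + DE m s * C k l s)) = 0 := by
  have hF1' : ∀ a b, (∑ j, C a b j * E j) = if a = b then 1 else 0 := by
    intro a b
    rw [show (∑ j, C a b j * E j) = ∑ j, C a j b * E j from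
      Finset.sum_congr rfl fun j _ => by rw [hCs a b j]]
    exact hF1 a b
  have hG1' : ∀ p a b, (∑ j, DC p a j b * E j) = -∑ j, C a j b * DE p j := by
    intro p a b
    have h := hG1 p a b
    rw [Finset.sum_add_distrib] at h
    linarith
  have hG1'' : ∀ p a b, (∑ j, DC p a b j * E j) = -∑ j, C a b j * DE p j := by
    intro p a b
    calc (∑ j, DC p a b j * E j) = ∑ j, DC p a j b * E j :=
          Finset.sum_congr rfl fun j _ => by rw [hDCs p a b j]
      _ = -∑ j, C a j b * DE p j := hG1' p a b
      _ = -∑ j, C a b j * DE p j := by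
          rw [show (∑ j, C a j b * DE p j) = ∑ j, C a b j * DE p j from
            Finset.sum_congr rfl fun j _ => by rw [hCs a j b]]
  have cF1 : ∀ (a b : Fin n) (K : ℝ) (t : Fin n → ℝ), (∀ i, t i = K * (C a i b * E i)) →
      (∑ i, t i) = if a = b then K else 0 := by
    intro a b K t h
    rw [fac K (fun i => C a i b * E i) t h, hF1 a b]
    split <;> ring
  have cF1' : ∀ (a b : Fin n) (K : ℝ) (t : Fin n → ℝ), (∀ i, t i = K * (C a b i * E i)) →
      (∑ i, t i) = if a = b then K else 0 := by
    intro a b K t h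
    rw [fac K (fun i => C a b i * E i) t h, hF1' a b]
    split <;> ring
  have cG1 : ∀ (p a b : Fin n) (K : ℝ) (t : Fin n → ℝ), (∀ j, t j = K * (DC p a j b * E j)) →
      (∑ j, t j) = ∑ j, -K * (C a j b * DE p j) := by
    intro p a b K t h
    rw [fac K (fun j => DC p a j b * E j) t h, hG1' p a b, mul_neg, ← neg_mul, Finset.mul_sum]
  have cG1'' : ∀ (p a b : Fin n) (K : ℝ) (t : Fin n → ℝ), (∀ j, t j = K * (DC p a b j * E j)) →
      (∑ j, t j) = ∑ j, -K * (C a b j * DE p j) := by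
    intro p a b K t h
    rw [fac K (fun j => DC p a b j * E j) t h, hG1'' p a b, mul_neg, ← neg_mul, Finset.mul_sum]
  -- ===== S2 contraction (free k l m) =====
  have hS2 : ∀ k l m, (∑ i, C k i m * DE l i) + (∑ i, C k i m * DE l i)
      + (∑ s, ∑ i, C k s m * C s i l * (∑ p, E p * DE p i))
      - (∑ s, ∑ i, C k s l * C s i m * (∑ p, E p * DE p i)) = 0 := by
    intro k l m
    have hP1 : (∑ i, ∑ j, ∑ s, DC s k j l * C s i m * (E i * E j))
        = -∑ j, C k j l * DE m j := by
      calc (∑ i, ∑ j, ∑ s, DC s k j l * C s i m * (E i * E j))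
          = ∑ j, ∑ s, ∑ i, DC s k j l * C s i m * (E i * E j) :=
            rotA (fun i j s => DC s k j l * C s i m * (E i * E j))
        _ = ∑ j, ∑ s, (if s = m then DC s k j l * E j else 0) :=
            Finset.sum_congr rfl fun j _ => Finset.sum_congr rfl fun s _ =>
              cF1 s m (DC s k j l * E j) _ (fun i => by ring)
        _ = ∑ j, DC m k j l * E j :=
            Finset.sum_congr rfl fun j _ => col1 m (fun s => DC s k j l * E j)
        _ = -∑ j, C k j l * DE m j := hG1' m k l
    have hP2 : (∑ i, ∑ j, ∑ s, DC j s i m * C k s l * (E i * E j))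
        = -(∑ s, ∑ i, C k s l * C s i m * (∑ p, E p * DE p i)) := by
      calc (∑ i, ∑ j, ∑ s, DC j s i m * C k s l * (E i * E j))
          = ∑ j, ∑ s, ∑ i, DC j s i m * C k s l * (E i * E j) :=
            rotA (fun i j s => DC j s i m * C k s l * (E i * E j))
        _ = ∑ j, ∑ s, ∑ i, -(C k s l * E j) * (C s i m * DE j i) :=
            Finset.sum_congr rfl fun j _ => Finset.sum_congr rfl fun s _ =>
              cG1 j s m (C k s l * E j) _ (fun i => by ring)
        _ = ∑ s, ∑ i, ∑ j, -(C k s l * E j) * (C s i m * DE j i) :=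
            rotA (fun j s i => -(C k s l * E j) * (C s i m * DE j i))
        _ = ∑ s, ∑ i, -(C k s l * C s i m) * (∑ p, E p * DE p i) :=
            Finset.sum_congr rfl fun s _ => Finset.sum_congr rfl fun i _ =>
              fac (-(C k s l * C s i m)) (fun p => E p * DE p i) _ (fun j => by ring)
        _ = -(∑ s, ∑ i, C k s l * C s i m * (∑ p, E p * DE p i)) := by
            simp only [neg_mul, Finset.sum_neg_distrib]
    have hP3 : (∑ i, ∑ j, ∑ s, DC s k i m * C s j l * (E i * E j))
        = -∑ i, C k i m * DE l i := by
      calc (∑ i, ∑ j, ∑ s, DC s k i m * C s j l * (E i * E j))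
          = ∑ s, ∑ i, ∑ j, DC s k i m * C s j l * (E i * E j) :=
            rotB (fun i j s => DC s k i m * C s j l * (E i * E j))
        _ = ∑ s, ∑ i, (if s = l then DC s k i m * E i else 0) :=
            Finset.sum_congr rfl fun s _ => Finset.sum_congr rfl fun i _ =>
              cF1 s l (DC s k i m * E i) _ (fun j => by ring)
        _ = ∑ i, ∑ s, (if s = l then DC s k i m * E i else 0) := Finset.sum_comm
        _ = ∑ i, DC l k i m * E i :=
            Finset.sum_congr rfl fun i _ => col1 l (fun s => DC s k i m * E i)
        _ = -∑ i, C k i m * DE l i := hG1' l k m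
    have hP4 : (∑ i, ∑ j, ∑ s, DC i s j l * C k s m * (E i * E j))
        = -(∑ s, ∑ i, C k s m * C s i l * (∑ p, E p * DE p i)) := by
      calc (∑ i, ∑ j, ∑ s, DC i s j l * C k s m * (E i * E j))
          = ∑ i, ∑ s, ∑ j, DC i s j l * C k s m * (E i * E j) :=
            sw23 (fun i j s => DC i s j l * C k s m * (E i * E j))
        _ = ∑ i, ∑ s, ∑ j, -(C k s m * E i) * (C s j l * DE i j) :=
            Finset.sum_congr rfl fun i _ => Finset.sum_congr rfl fun s _ =>
              cG1 i s l (C k s m * E i) _ (fun j => by ring)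
        _ = ∑ s, ∑ j, ∑ i, -(C k s m * E i) * (C s j l * DE i j) :=
            rotA (fun i s j => -(C k s m * E i) * (C s j l * DE i j))
        _ = ∑ s, ∑ j, -(C k s m * C s j l) * (∑ p, E p * DE p j) :=
            Finset.sum_congr rfl fun s _ => Finset.sum_congr rfl fun j _ =>
              fac (-(C k s m * C s j l)) (fun p => E p * DE p j) _ (fun i => by ring)
        _ = -(∑ s, ∑ i, C k s m * C s i l * (∑ p, E p * DE p i)) := by
            simp only [neg_mul, Finset.sum_neg_distrib]
    have hP5 : (∑ i, ∑ j, ∑ s, DC l s j m * C k s i * (E i * E j))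
        = -∑ j, C k j m * DE l j := by
      calc (∑ i, ∑ j, ∑ s, DC l s j m * C k s i * (E i * E j))
          = ∑ j, ∑ s, ∑ i, DC l s j m * C k s i * (E i * E j) :=
            rotA (fun i j s => DC l s j m * C k s i * (E i * E j))
        _ = ∑ j, ∑ s, (if k = s then DC l s j m * E j else 0) :=
            Finset.sum_congr rfl fun j _ => Finset.sum_congr rfl fun s _ =>
              cF1' k s (DC l s j m * E j) _ (fun i => by ring)
        _ = ∑ j, DC l k j m * E j :=
            Finset.sum_congr rfl fun j _ => col2 k (fun s => DC l s j m * E j)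
        _ = -∑ j, C k j m * DE l j := hG1' l k m
    have hP6 : (∑ i, ∑ j, ∑ s, DC m s l i * C k j s * (E i * E j))
        = -∑ i, C k l i * DE m i := by
      calc (∑ i, ∑ j, ∑ s, DC m s l i * C k j s * (E i * E j))
          = ∑ s, ∑ i, ∑ j, DC m s l i * C k j s * (E i * E j) :=
            rotB (fun i j s => DC m s l i * C k j s * (E i * E j))
        _ = ∑ s, ∑ i, (if k = s then DC m s l i * E i else 0) :=
            Finset.sum_congr rfl fun s _ => Finset.sum_congr rfl fun i _ =>
              cF1 k s (DC m s l i * E i) _ (fun j => by ring)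
        _ = ∑ i, ∑ s, (if k = s then DC m s l i * E i else 0) := Finset.sum_comm
        _ = ∑ i, DC m k l i * E i :=
            Finset.sum_congr rfl fun i _ => col2 k (fun s => DC m s l i * E i)
        _ = -∑ i, C k l i * DE m i := hG1'' m k l
    have h0 : (∑ i, ∑ j, ∑ s, DC s k j l * C s i m * (E i * E j))
        + (∑ i, ∑ j, ∑ s, DC j s i m * C k s l * (E i * E j))
        - (∑ i, ∑ j, ∑ s, DC s k i m * C s j l * (E i * E j))
        - (∑ i, ∑ j, ∑ s, DC i s j l * C k s m * (E i * E j))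
        - (∑ i, ∑ j, ∑ s, DC l s j m * C k s i * (E i * E j))
        - (∑ i, ∑ j, ∑ s, DC m s l i * C k j s * (E i * E j)) = 0 := by
      have h1 : (∑ i, ∑ j, ∑ s, (DC s k j l * C s i m + DC j s i m * C k s l
          - DC s k i m * C s j l - DC i s j l * C k s m
          - DC l s j m * C k s i - DC m s l i * C k j s) * (E i * E j)) = 0 :=
        Finset.sum_eq_zero fun i _ => Finset.sum_eq_zero fun j _ => by
          rw [← Finset.sum_mul, hHM i j k l m, zero_mul]
      calc _ = (∑ i, ∑ j, ∑ s, (DC s k j l * C s i m + DC j s i m * C k s l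
          - DC s k i m * C s j l - DC i s j l * C k s m
          - DC l s j m * C k s i - DC m s l i * C k j s) * (E i * E j)) := by
            simp only [add_mul, sub_mul, Finset.sum_add_distrib, Finset.sum_sub_distrib]
        _ = 0 := h1
    have hfix : (∑ i, C k l i * DE m i) = ∑ i, C k i l * DE m i :=
      Finset.sum_congr rfl fun i _ => by rw [hCs k l i]
    linarith [h0, hP1, hP2, hP3, hP4, hP5, hP6, hfix]
  -- ===== S4 contraction (free i k m) =====
  have hS4 : ∀ i k m, (∑ s, C s i m * DE s k) = (∑ s, C k s m * DE i s)
      + (∑ s, C k s i * DE m s)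
      + (∑ s, ∑ j, C k s i * C s j m * (∑ p, E p * DE p j)) := by
    intro i k m
    have hR1 : (∑ j, ∑ l, ∑ s, DC s k j l * C s i m * (E j * E l))
        = -(∑ s, C s i m * DE s k) := by
      calc (∑ j, ∑ l, ∑ s, DC s k j l * C s i m * (E j * E l))
          = ∑ j, ∑ s, ∑ l, DC s k j l * C s i m * (E j * E l) :=
            sw23 (fun j l s => DC s k j l * C s i m * (E j * E l))
        _ = ∑ j, ∑ s, ∑ l, -(C s i m * E j) * (C k j l * DE s l) :=
            Finset.sum_congr rfl fun j _ => Finset.sum_congr rfl fun s _ =>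
              cG1'' s k j (C s i m * E j) _ (fun l => by ring)
        _ = ∑ s, ∑ l, ∑ j, -(C s i m * E j) * (C k j l * DE s l) :=
            rotA (fun j s l => -(C s i m * E j) * (C k j l * DE s l))
        _ = ∑ s, ∑ l, (if k = l then -(C s i m * DE s l) else 0) :=
            Finset.sum_congr rfl fun s _ => Finset.sum_congr rfl fun l _ =>
              cF1 k l (-(C s i m * DE s l)) _ (fun j => by ring)
        _ = ∑ s, -(C s i m * DE s k) :=
            Finset.sum_congr rfl fun s _ => col2 k (fun l => -(C s i m * DE s l))
        _ = -(∑ s, C s i m * DE s k) := by simp only [Finset.sum_neg_distrib]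
    have hR2 : (∑ j, ∑ l, ∑ s, DC j s i m * C k s l * (E j * E l))
        = ∑ j, DC j k i m * E j := by
      calc (∑ j, ∑ l, ∑ s, DC j s i m * C k s l * (E j * E l))
          = ∑ j, ∑ s, ∑ l, DC j s i m * C k s l * (E j * E l) :=
            sw23 (fun j l s => DC j s i m * C k s l * (E j * E l))
        _ = ∑ j, ∑ s, (if k = s then DC j s i m * E j else 0) :=
            Finset.sum_congr rfl fun j _ => Finset.sum_congr rfl fun s _ =>
              cF1' k s (DC j s i m * E j) _ (fun l => by ring)
        _ = ∑ j, DC j k i m * E j :=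
            Finset.sum_congr rfl fun j _ => col2 k (fun s => DC j s i m * E j)
    have hR3 : (∑ j, ∑ l, ∑ s, DC s k i m * C s j l * (E j * E l))
        = ∑ j, DC j k i m * E j := by
      calc (∑ j, ∑ l, ∑ s, DC s k i m * C s j l * (E j * E l))
          = ∑ l, ∑ s, ∑ j, DC s k i m * C s j l * (E j * E l) :=
            rotA (fun j l s => DC s k i m * C s j l * (E j * E l))
        _ = ∑ l, ∑ s, (if s = l then DC s k i m * E l else 0) :=
            Finset.sum_congr rfl fun l _ => Finset.sum_congr rfl fun s _ =>
              cF1 s l (DC s k i m * E l) _ (fun j => by ring)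
        _ = ∑ l, DC l k i m * E l :=
            Finset.sum_congr rfl fun l _ => col1 l (fun s => DC s k i m * E l)
    have hR4 : (∑ j, ∑ l, ∑ s, DC i s j l * C k s m * (E j * E l))
        = -(∑ s, C k s m * DE i s) := by
      calc (∑ j, ∑ l, ∑ s, DC i s j l * C k s m * (E j * E l))
          = ∑ l, ∑ s, ∑ j, DC i s j l * C k s m * (E j * E l) :=
            rotA (fun j l s => DC i s j l * C k s m * (E j * E l))
        _ = ∑ l, ∑ s, ∑ j, -(C k s m * E l) * (C s j l * DE i j) :=
            Finset.sum_congr rfl fun l _ => Finset.sum_congr rfl fun s _ =>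
              cG1 i s l (C k s m * E l) _ (fun j => by ring)
        _ = ∑ s, ∑ j, ∑ l, -(C k s m * E l) * (C s j l * DE i j) :=
            rotA (fun l s j => -(C k s m * E l) * (C s j l * DE i j))
        _ = ∑ s, ∑ j, (if s = j then -(C k s m * DE i j) else 0) :=
            Finset.sum_congr rfl fun s _ => Finset.sum_congr rfl fun j _ =>
              cF1' s j (-(C k s m * DE i j)) _ (fun l => by ring)
        _ = ∑ s, -(C k s m * DE i s) :=
            Finset.sum_congr rfl fun s _ => col2 s (fun j => -(C k s m * DE i j))
        _ = -(∑ s, C k s m * DE i s) := by simp only [Finset.sum_neg_distrib]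
    have hR5 : (∑ j, ∑ l, ∑ s, DC l s j m * C k s i * (E j * E l))
        = -(∑ s, ∑ j, C k s i * C s j m * (∑ p, E p * DE p j)) := by
      calc (∑ j, ∑ l, ∑ s, DC l s j m * C k s i * (E j * E l))
          = ∑ l, ∑ s, ∑ j, DC l s j m * C k s i * (E j * E l) :=
            rotA (fun j l s => DC l s j m * C k s i * (E j * E l))
        _ = ∑ l, ∑ s, ∑ j, -(C k s i * E l) * (C s j m * DE l j) :=
            Finset.sum_congr rfl fun l _ => Finset.sum_congr rfl fun s _ =>
              cG1 l s m (C k s i * E l) _ (fun j => by ring)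
        _ = ∑ s, ∑ j, ∑ l, -(C k s i * E l) * (C s j m * DE l j) :=
            rotA (fun l s j => -(C k s i * E l) * (C s j m * DE l j))
        _ = ∑ s, ∑ j, -(C k s i * C s j m) * (∑ p, E p * DE p j) :=
            Finset.sum_congr rfl fun s _ => Finset.sum_congr rfl fun j _ =>
              fac (-(C k s i * C s j m)) (fun p => E p * DE p j) _ (fun l => by ring)
        _ = -(∑ s, ∑ j, C k s i * C s j m * (∑ p, E p * DE p j)) := by
            simp only [neg_mul, Finset.sum_neg_distrib]
    have hR6 : (∑ j, ∑ l, ∑ s, DC m s l i * C k j s * (E j * E l))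
        = -∑ s, C k s i * DE m s := by
      calc (∑ j, ∑ l, ∑ s, DC m s l i * C k j s * (E j * E l))
          = ∑ l, ∑ s, ∑ j, DC m s l i * C k j s * (E j * E l) :=
            rotA (fun j l s => DC m s l i * C k j s * (E j * E l))
        _ = ∑ l, ∑ s, (if k = s then DC m s l i * E l else 0) :=
            Finset.sum_congr rfl fun l _ => Finset.sum_congr rfl fun s _ =>
              cF1 k s (DC m s l i * E l) _ (fun j => by ring)
        _ = ∑ l, DC m k l i * E l :=
            Finset.sum_congr rfl fun l _ => col2 k (fun s => DC m s l i * E l)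
        _ = -∑ s, C k s i * DE m s := hG1' m k i
    have h0 : (∑ j, ∑ l, ∑ s, DC s k j l * C s i m * (E j * E l))
        + (∑ j, ∑ l, ∑ s, DC j s i m * C k s l * (E j * E l))
        - (∑ j, ∑ l, ∑ s, DC s k i m * C s j l * (E j * E l))
        - (∑ j, ∑ l, ∑ s, DC i s j l * C k s m * (E j * E l))
        - (∑ j, ∑ l, ∑ s, DC l s j m * C k s i * (E j * E l))
        - (∑ j, ∑ l, ∑ s, DC m s l i * C k j s * (E j * E l)) = 0 := by
      have h1 : (∑ j, ∑ l, ∑ s, (DC s k j l * C s i m + DC j s i m * C k s l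
          - DC s k i m * C s j l - DC i s j l * C k s m
          - DC l s j m * C k s i - DC m s l i * C k j s) * (E j * E l)) = 0 :=
        Finset.sum_eq_zero fun j _ => Finset.sum_eq_zero fun l _ => by
          rw [← Finset.sum_mul, hHM i j k l m, zero_mul]
      calc _ = (∑ j, ∑ l, ∑ s, (DC s k j l * C s i m + DC j s i m * C k s l
          - DC s k i m * C s j l - DC i s j l * C k s m
          - DC l s j m * C k s i - DC m s l i * C k j s) * (E j * E l)) := by
            simp only [add_mul, sub_mul, Finset.sum_add_distrib, Finset.sum_sub_distrib]
        _ = 0 := h1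
    linarith [h0, hR1, hR2, hR3, hR4, hR5, hR6]
  -- ===== S7 contraction (free i k l) =====
  have hS7 : ∀ i k l, (∑ m, DC m k l i * E m)
      = -(∑ s, ∑ m, C k s l * C s i m * (∑ p, E p * DE p m))
        + (∑ m, C k i m * DE l m) + (∑ s, C k s i * DE l s) := by
    intro i k l
    have hW1 : (∑ j, ∑ m, ∑ s, DC s k j l * C s i m * (E j * E m))
        = -∑ j, C k j l * DE i j := by
      calc (∑ j, ∑ m, ∑ s, DC s k j l * C s i m * (E j * E m))
          = ∑ j, ∑ s, ∑ m, DC s k j l * C s i m * (E j * E m) :=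
            sw23 (fun j m s => DC s k j l * C s i m * (E j * E m))
        _ = ∑ j, ∑ s, (if s = i then DC s k j l * E j else 0) :=
            Finset.sum_congr rfl fun j _ => Finset.sum_congr rfl fun s _ =>
              cF1' s i (DC s k j l * E j) _ (fun m => by ring)
        _ = ∑ j, DC i k j l * E j :=
            Finset.sum_congr rfl fun j _ => col1 i (fun s => DC s k j l * E j)
        _ = -∑ j, C k j l * DE i j := hG1' i k l
    have hW2 : (∑ j, ∑ m, ∑ s, DC j s i m * C k s l * (E j * E m))
        = -(∑ s, ∑ m, C k s l * C s i m * (∑ p, E p * DE p m)) := by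
      calc (∑ j, ∑ m, ∑ s, DC j s i m * C k s l * (E j * E m))
          = ∑ j, ∑ s, ∑ m, DC j s i m * C k s l * (E j * E m) :=
            sw23 (fun j m s => DC j s i m * C k s l * (E j * E m))
        _ = ∑ j, ∑ s, ∑ m, -(C k s l * E j) * (C s i m * DE j m) :=
            Finset.sum_congr rfl fun j _ => Finset.sum_congr rfl fun s _ =>
              cG1'' j s i (C k s l * E j) _ (fun m => by ring)
        _ = ∑ s, ∑ m, ∑ j, -(C k s l * E j) * (C s i m * DE j m) :=
            rotA (fun j s m => -(C k s l * E j) * (C s i m * DE j m))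
        _ = ∑ s, ∑ m, -(C k s l * C s i m) * (∑ p, E p * DE p m) :=
            Finset.sum_congr rfl fun s _ => Finset.sum_congr rfl fun m _ =>
              fac (-(C k s l * C s i m)) (fun p => E p * DE p m) _ (fun j => by ring)
        _ = -(∑ s, ∑ m, C k s l * C s i m * (∑ p, E p * DE p m)) := by
            simp only [neg_mul, Finset.sum_neg_distrib]
    have hW3 : (∑ j, ∑ m, ∑ s, DC s k i m * C s j l * (E j * E m))
        = -∑ m, C k i m * DE l m := by
      calc (∑ j, ∑ m, ∑ s, DC s k i m * C s j l * (E j * E m))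
          = ∑ m, ∑ s, ∑ j, DC s k i m * C s j l * (E j * E m) :=
            rotA (fun j m s => DC s k i m * C s j l * (E j * E m))
        _ = ∑ m, ∑ s, (if s = l then DC s k i m * E m else 0) :=
            Finset.sum_congr rfl fun m _ => Finset.sum_congr rfl fun s _ =>
              cF1 s l (DC s k i m * E m) _ (fun j => by ring)
        _ = ∑ m, DC l k i m * E m :=
            Finset.sum_congr rfl fun m _ => col1 l (fun s => DC s k i m * E m)
        _ = -∑ m, C k i m * DE l m := hG1'' l k i
    have hW4 : (∑ j, ∑ m, ∑ s, DC i s j l * C k s m * (E j * E m))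
        = -∑ j, C k j l * DE i j := by
      calc (∑ j, ∑ m, ∑ s, DC i s j l * C k s m * (E j * E m))
          = ∑ j, ∑ s, ∑ m, DC i s j l * C k s m * (E j * E m) :=
            sw23 (fun j m s => DC i s j l * C k s m * (E j * E m))
        _ = ∑ j, ∑ s, (if k = s then DC i s j l * E j else 0) :=
            Finset.sum_congr rfl fun j _ => Finset.sum_congr rfl fun s _ =>
              cF1' k s (DC i s j l * E j) _ (fun m => by ring)
        _ = ∑ j, DC i k j l * E j :=
            Finset.sum_congr rfl fun j _ => col2 k (fun s => DC i s j l * E j)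
        _ = -∑ j, C k j l * DE i j := hG1' i k l
    have hW5 : (∑ j, ∑ m, ∑ s, DC l s j m * C k s i * (E j * E m))
        = -(∑ s, C k s i * DE l s) := by
      calc (∑ j, ∑ m, ∑ s, DC l s j m * C k s i * (E j * E m))
          = ∑ m, ∑ s, ∑ j, DC l s j m * C k s i * (E j * E m) :=
            rotA (fun j m s => DC l s j m * C k s i * (E j * E m))
        _ = ∑ m, ∑ s, ∑ j, -(C k s i * E m) * (C s j m * DE l j) :=
            Finset.sum_congr rfl fun m _ => Finset.sum_congr rfl fun s _ =>
              cG1 l s m (C k s i * E m) _ (fun j => by ring)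
        _ = ∑ s, ∑ j, ∑ m, -(C k s i * E m) * (C s j m * DE l j) :=
            rotA (fun m s j => -(C k s i * E m) * (C s j m * DE l j))
        _ = ∑ s, ∑ j, (if s = j then -(C k s i * DE l j) else 0) :=
            Finset.sum_congr rfl fun s _ => Finset.sum_congr rfl fun j _ =>
              cF1' s j (-(C k s i * DE l j)) _ (fun m => by ring)
        _ = ∑ s, -(C k s i * DE l s) :=
            Finset.sum_congr rfl fun s _ => col2 s (fun j => -(C k s i * DE l j))
        _ = -(∑ s, C k s i * DE l s) := by simp only [Finset.sum_neg_distrib]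
    have hW6 : (∑ j, ∑ m, ∑ s, DC m s l i * C k j s * (E j * E m))
        = ∑ m, DC m k l i * E m := by
      calc (∑ j, ∑ m, ∑ s, DC m s l i * C k j s * (E j * E m))
          = ∑ m, ∑ s, ∑ j, DC m s l i * C k j s * (E j * E m) :=
            rotA (fun j m s => DC m s l i * C k j s * (E j * E m))
        _ = ∑ m, ∑ s, (if k = s then DC m s l i * E m else 0) :=
            Finset.sum_congr rfl fun m _ => Finset.sum_congr rfl fun s _ =>
              cF1 k s (DC m s l i * E m) _ (fun j => by ring)
        _ = ∑ m, DC m k l i * E m :=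
            Finset.sum_congr rfl fun m _ => col2 k (fun s => DC m s l i * E m)
    have h0 : (∑ j, ∑ m, ∑ s, DC s k j l * C s i m * (E j * E m))
        + (∑ j, ∑ m, ∑ s, DC j s i m * C k s l * (E j * E m))
        - (∑ j, ∑ m, ∑ s, DC s k i m * C s j l * (E j * E m))
        - (∑ j, ∑ m, ∑ s, DC i s j l * C k s m * (E j * E m))
        - (∑ j, ∑ m, ∑ s, DC l s j m * C k s i * (E j * E m))
        - (∑ j, ∑ m, ∑ s, DC m s l i * C k j s * (E j * E m)) = 0 := by
      have h1 : (∑ j, ∑ m, ∑ s, (DC s k j l * C s i m + DC j s i m * C k s l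
          - DC s k i m * C s j l - DC i s j l * C k s m
          - DC l s j m * C k s i - DC m s l i * C k j s) * (E j * E m)) = 0 :=
        Finset.sum_eq_zero fun j _ => Finset.sum_eq_zero fun m _ => by
          rw [← Finset.sum_mul, hHM i j k l m, zero_mul]
      calc _ = (∑ j, ∑ m, ∑ s, (DC s k j l * C s i m + DC j s i m * C k s l
          - DC s k i m * C s j l - DC i s j l * C k s m
          - DC l s j m * C k s i - DC m s l i * C k j s) * (E j * E m)) := by
            simp only [add_mul, sub_mul, Finset.sum_add_distrib, Finset.sum_sub_distrib]
        _ = 0 := h1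
    linarith [h0, hW1, hW2, hW3, hW4, hW5, hW6]
  -- ===== assembly =====
  have hT : ∀ k l m, (∑ s, (E s * DC s k l m - DE s k * C s l m + DE l s * C k s m + DE m s * C k l s))
      = (∑ s, E s * DC s k l m) - (∑ s, ∑ j, C k s l * C s j m * (∑ p, E p * DE p j)) := by
    intro k l m
    have hsplit : (∑ s, (E s * DC s k l m - DE s k * C s l m + DE l s * C k s m + DE m s * C k l s))
        = (∑ s, E s * DC s k l m) - (∑ s, DE s k * C s l m)
          + (∑ s, DE l s * C k s m) + (∑ s, DE m s * C k l s) := by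
      simp only [Finset.sum_add_distrib, Finset.sum_sub_distrib]
    have h4 := hS4 l k m
    have e1 : (∑ s, DE s k * C s l m) = ∑ s, C s l m * DE s k :=
      Finset.sum_congr rfl fun s _ => by ring
    have e2 : (∑ s, DE l s * C k s m) = ∑ s, C k s m * DE l s :=
      Finset.sum_congr rfl fun s _ => by ring
    have e3 : (∑ s, DE m s * C k l s) = ∑ s, C k s l * DE m s :=
      Finset.sum_congr rfl fun s _ => by rw [hCs k l s]; ring
    linarith [hsplit, h4, e1, e2, e3]
  have hEDCsym : ∀ k l m, (∑ s, E s * DC s k l m) = ∑ s, E s * DC s k m l :=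
    fun k l m => Finset.sum_congr rfl fun s _ => by rw [hDCs s k l m]
  have hTsym : ∀ k l m, (∑ s, (E s * DC s k l m - DE s k * C s l m + DE l s * C k s m + DE m s * C k l s))
      = (∑ s, (E s * DC s k m l - DE s k * C s m l + DE m s * C k s l + DE l s * C k m s)) :=
    fun k l m => Finset.sum_congr rfl fun s _ => by
      rw [hDCs s k l m, hCs s l m, hCs k s m, hCs k l s]; ring
  have hQsym : ∀ k l m, (∑ s, ∑ j, C k s l * C s j m * (∑ p, E p * DE p j))
      = (∑ s, ∑ j, C k s m * C s j l * (∑ p, E p * DE p j)) := by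
    intro k l m
    have := hT k l m
    have := hT k m l
    have := hTsym k l m
    have := hEDCsym k l m
    linarith
  have hH6 : ∀ k l m, (∑ i, C k i m * DE l i) = 0 := by
    intro k l m
    have h2 := hS2 k l m
    have hq := hQsym k l m
    linarith
  have hH8 : ∀ a b, (∑ s, C a s b * (∑ p, E p * DE p s)) = 0 := by
    intro a b
    calc (∑ s, C a s b * (∑ p, E p * DE p s))
        = ∑ s, ∑ p, C a s b * (E p * DE p s) :=
          Finset.sum_congr rfl fun s _ => Finset.mul_sum _ _ _
      _ = ∑ p, ∑ s, C a s b * (E p * DE p s) := Finset.sum_comm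
      _ = ∑ p, E p * (∑ s, C a s b * DE p s) :=
          Finset.sum_congr rfl fun p _ =>
            fac (E p) (fun s => C a s b * DE p s) _ (fun s => by ring)
      _ = 0 := Finset.sum_eq_zero fun p _ => by rw [hH6 a p b, mul_zero]
  have hQ0 : ∀ k l m, (∑ s, ∑ j, C k s l * C s j m * (∑ p, E p * DE p j)) = 0 := by
    intro k l m
    refine Finset.sum_eq_zero fun s _ => ?_
    calc (∑ j, C k s l * C s j m * (∑ p, E p * DE p j))
        = C k s l * ∑ j, C s j m * (∑ p, E p * DE p j) :=
          fac (C k s l) (fun j => C s j m * (∑ p, E p * DE p j)) _ (fun j => by ring)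
      _ = 0 := by rw [hH8 s m, mul_zero]
  have hEDC0 : ∀ k l m, (∑ s, E s * DC s k l m) = 0 := by
    intro k l m
    have h7 := hS7 m k l
    have hz1 : (∑ s, ∑ m', C k s l * C s m m' * (∑ p, E p * DE p m')) = 0 := by
      refine Finset.sum_eq_zero fun s _ => ?_
      calc (∑ m', C k s l * C s m m' * (∑ p, E p * DE p m'))
          = C k s l * ∑ m', C s m m' * (∑ p, E p * DE p m') :=
            fac (C k s l) (fun m' => C s m m' * (∑ p, E p * DE p m')) _ (fun m' => by ring)
        _ = C k s l * ∑ m', C s m' m * (∑ p, E p * DE p m') := by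
            rw [show (∑ m', C s m m' * (∑ p, E p * DE p m'))
                = ∑ m', C s m' m * (∑ p, E p * DE p m') from
              Finset.sum_congr rfl fun m' _ => by rw [hCs s m m']]
        _ = 0 := by rw [hH8 s m, mul_zero]
    have hz2 : (∑ m', C k m m' * DE l m') = 0 := by
      rw [show (∑ m', C k m m' * DE l m') = ∑ m', C k m' m * DE l m' from
        Finset.sum_congr rfl fun m' _ => by rw [hCs k m m']]
      exact hH6 k l m
    have hz3 : (∑ s, C k s m * DE l s) = 0 := hH6 k l m
    have hmain : (∑ s, DC s k l m * E s) = 0 := by rw [h7, hz1, hz2, hz3]; ring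
    calc (∑ s, E s * DC s k l m) = ∑ s, DC s k l m * E s :=
        Finset.sum_congr rfl fun s _ => by ring
      _ = 0 := hmain
  intro k l m
  rw [hT k l m, hQ0 k l m, hEDC0 k l m]
  ring


private lemma pd_const (r : ℝ) (p : Fin n) (x : Fin n → ℝ) :
    pd (fun _ : Fin n → ℝ => r) p x = 0 := by simp [pd]

private lemma pd_congr {U : Set (Fin n → ℝ)} (hU : IsOpen U) {x : Fin n → ℝ} (hx : x ∈ U)
    {f g : (Fin n → ℝ) → ℝ} (h : ∀ y ∈ U, f y = g y) (p : Fin n) : pd f p x = pd g p x := by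
  simp only [pd]
  rw [Filter.EventuallyEq.fderiv_eq (Filter.eventuallyEq_of_mem (hU.mem_nhds hx) fun y hy => h y hy)]

private lemma pd_mul {x : Fin n → ℝ} (f g : (Fin n → ℝ) → ℝ)
    (hf : DifferentiableAt ℝ f x) (hg : DifferentiableAt ℝ g x) (p : Fin n) :
    pd (fun y => f y * g y) p x = f x * pd g p x + g x * pd f p x := by
  simp only [pd]
  rw [fderiv_fun_mul hf hg]
  simp

private lemma pd_sum {x : Fin n → ℝ} (A : Fin n → (Fin n → ℝ) → ℝ)
    (h : ∀ j, DifferentiableAt ℝ (A j) x) (p : Fin n) :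
    pd (fun y => ∑ j, A j y) p x = ∑ j, pd (A j) p x := by
  simp only [pd]
  rw [fderiv_fun_sum fun j _ => h j]
  simp

private lemma diffAt {U : Set (Fin n → ℝ)} (hU : IsOpen U) {x : Fin n → ℝ} (hx : x ∈ U)
    {f : (Fin n → ℝ) → ℝ} (hf : ContDiffOn ℝ (⊤ : ℕ∞) f U) : DifferentiableAt ℝ f x :=
  (hf.contDiffAt (hU.mem_nhds hx)).differentiableAt (by simp)

private lemma part1_alg (C : Fin n → Fin n → Fin n → ℝ) (DC : Fin n → Fin n → Fin n → Fin n → ℝ)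
    (E Z W : Fin n → ℝ) (DE DZ DW : Fin n → Fin n → ℝ) (i : Fin n)
    (hCs : ∀ a b c, C a b c = C a c b) :
    (∑ s, (E s * (∑ j, ∑ k, (DC s i j k * (Z j * W k) + C i j k * (DZ s j * W k)
        + C i j k * (Z j * DW s k)))
      - (∑ j, ∑ k, C s j k * (Z j * W k)) * DE s i))
    = (∑ j, ∑ k, (∑ s, (E s * DC s i j k - DE s i * C s j k + DE j s * C i s k
        + DE k s * C i j s)) * (Z j * W k))
      + (∑ j, ∑ k, C i j k * (∑ s, (E s * DZ s j - Z s * DE s j)) * W k)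
      + (∑ j, ∑ k, C i j k * (∑ s, (E s * DW s j - W s * DE s j)) * Z k) := by
  have hL : (∑ s, (E s * (∑ j, ∑ k, (DC s i j k * (Z j * W k) + C i j k * (DZ s j * W k)
        + C i j k * (Z j * DW s k)))
      - (∑ j, ∑ k, C s j k * (Z j * W k)) * DE s i))
      = (∑ s, ∑ j, ∑ k, E s * (DC s i j k * (Z j * W k)))
        + (∑ s, ∑ j, ∑ k, E s * (C i j k * (DZ s j * W k)))
        + (∑ s, ∑ j, ∑ k, E s * (C i j k * (Z j * DW s k)))
        - (∑ s, ∑ j, ∑ k, C s j k * (Z j * W k) * DE s i) := by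
    have hstep : ∀ s, (E s * (∑ j, ∑ k, (DC s i j k * (Z j * W k) + C i j k * (DZ s j * W k)
        + C i j k * (Z j * DW s k)))
      - (∑ j, ∑ k, C s j k * (Z j * W k)) * DE s i)
        = ∑ j, ∑ k, (E s * (DC s i j k * (Z j * W k)) + E s * (C i j k * (DZ s j * W k))
          + E s * (C i j k * (Z j * DW s k)) - C s j k * (Z j * W k) * DE s i) := by
      intro s
      rw [Finset.mul_sum, Finset.sum_mul, ← Finset.sum_sub_distrib]
      refine Finset.sum_congr rfl fun j _ => ?_
      rw [Finset.mul_sum, Finset.sum_mul, ← Finset.sum_sub_distrib]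
      refine Finset.sum_congr rfl fun k _ => ?_
      ring
    rw [Finset.sum_congr rfl fun s _ => hstep s]
    simp only [Finset.sum_add_distrib, Finset.sum_sub_distrib]
  have hR1 : (∑ j, ∑ k, (∑ s, (E s * DC s i j k - DE s i * C s j k + DE j s * C i s k
        + DE k s * C i j s)) * (Z j * W k))
      = (∑ j, ∑ k, ∑ s, (E s * DC s i j k) * (Z j * W k))
        - (∑ j, ∑ k, ∑ s, (DE s i * C s j k) * (Z j * W k))
        + (∑ j, ∑ k, ∑ s, (DE j s * C i s k) * (Z j * W k))
        + (∑ j, ∑ k, ∑ s, (DE k s * C i j s) * (Z j * W k)) := by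
    have hstep : ∀ j k, ((∑ s, (E s * DC s i j k - DE s i * C s j k + DE j s * C i s k
        + DE k s * C i j s)) * (Z j * W k))
        = ∑ s, ((E s * DC s i j k) * (Z j * W k) - (DE s i * C s j k) * (Z j * W k)
          + (DE j s * C i s k) * (Z j * W k) + (DE k s * C i j s) * (Z j * W k)) := by
      intro j k
      rw [Finset.sum_mul]
      exact Finset.sum_congr rfl fun s _ => by ring
    rw [Finset.sum_congr rfl fun j _ => Finset.sum_congr rfl fun k _ => hstep j k]
    simp only [Finset.sum_add_distrib, Finset.sum_sub_distrib]
  have hR2 : (∑ j, ∑ k, C i j k * (∑ s, (E s * DZ s j - Z s * DE s j)) * W k)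
      = (∑ j, ∑ k, ∑ s, C i j k * (E s * DZ s j) * W k)
        - (∑ j, ∑ k, ∑ s, C i j k * (Z s * DE s j) * W k) := by
    have hstep : ∀ j k, (C i j k * (∑ s, (E s * DZ s j - Z s * DE s j)) * W k)
        = ∑ s, (C i j k * (E s * DZ s j) * W k - C i j k * (Z s * DE s j) * W k) := by
      intro j k
      rw [Finset.mul_sum, Finset.sum_mul]
      exact Finset.sum_congr rfl fun s _ => by ring
    rw [Finset.sum_congr rfl fun j _ => Finset.sum_congr rfl fun k _ => hstep j k]
    simp only [Finset.sum_sub_distrib]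
  have hR3 : (∑ j, ∑ k, C i j k * (∑ s, (E s * DW s j - W s * DE s j)) * Z k)
      = (∑ j, ∑ k, ∑ s, C i j k * (E s * DW s j) * Z k)
        - (∑ j, ∑ k, ∑ s, C i j k * (W s * DE s j) * Z k) := by
    have hstep : ∀ j k, (C i j k * (∑ s, (E s * DW s j - W s * DE s j)) * Z k)
        = ∑ s, (C i j k * (E s * DW s j) * Z k - C i j k * (W s * DE s j) * Z k) := by
      intro j k
      rw [Finset.mul_sum, Finset.sum_mul]
      exact Finset.sum_congr rfl fun s _ => by ring
    rw [Finset.sum_congr rfl fun j _ => Finset.sum_congr rfl fun k _ => hstep j k]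
    simp only [Finset.sum_sub_distrib]
  -- matching equalities
  have m1 : (∑ s, ∑ j, ∑ k, E s * (DC s i j k * (Z j * W k)))
      = ∑ j, ∑ k, ∑ s, (E s * DC s i j k) * (Z j * W k) :=
    (rotA fun s j k => E s * (DC s i j k * (Z j * W k))).trans
      (Finset.sum_congr rfl fun j _ => Finset.sum_congr rfl fun k _ =>
        Finset.sum_congr rfl fun s _ => by ring)
  have m2 : (∑ s, ∑ j, ∑ k, C s j k * (Z j * W k) * DE s i)
      = ∑ j, ∑ k, ∑ s, (DE s i * C s j k) * (Z j * W k) :=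
    (rotA fun s j k => C s j k * (Z j * W k) * DE s i).trans
      (Finset.sum_congr rfl fun j _ => Finset.sum_congr rfl fun k _ =>
        Finset.sum_congr rfl fun s _ => by ring)
  have m3 : (∑ s, ∑ j, ∑ k, E s * (C i j k * (DZ s j * W k)))
      = ∑ j, ∑ k, ∑ s, C i j k * (E s * DZ s j) * W k :=
    (rotA fun s j k => E s * (C i j k * (DZ s j * W k))).trans
      (Finset.sum_congr rfl fun j _ => Finset.sum_congr rfl fun k _ =>
        Finset.sum_congr rfl fun s _ => by ring)
  have m4 : (∑ s, ∑ j, ∑ k, E s * (C i j k * (Z j * DW s k)))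
      = ∑ j, ∑ k, ∑ s, C i j k * (E s * DW s j) * Z k := by
    calc (∑ s, ∑ j, ∑ k, E s * (C i j k * (Z j * DW s k)))
        = ∑ j, ∑ k, ∑ s, E s * (C i j k * (Z j * DW s k)) :=
          rotA fun s j k => E s * (C i j k * (Z j * DW s k))
      _ = ∑ k, ∑ j, ∑ s, E s * (C i j k * (Z j * DW s k)) :=
          sw12 fun j k s => E s * (C i j k * (Z j * DW s k))
      _ = ∑ j, ∑ k, ∑ s, C i j k * (E s * DW s j) * Z k :=
          Finset.sum_congr rfl fun a _ => Finset.sum_congr rfl fun b _ =>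
            Finset.sum_congr rfl fun s _ => by rw [hCs i a b]; ring
  have m5 : (∑ j, ∑ k, ∑ s, (DE j s * C i s k) * (Z j * W k))
      = ∑ j, ∑ k, ∑ s, C i j k * (Z s * DE s j) * W k :=
    (sw13 fun j k s => (DE j s * C i s k) * (Z j * W k)).trans
      (Finset.sum_congr rfl fun a _ => Finset.sum_congr rfl fun b _ =>
        Finset.sum_congr rfl fun c _ => by ring)
  have m6 : (∑ j, ∑ k, ∑ s, (DE k s * C i j s) * (Z j * W k))
      = ∑ j, ∑ k, ∑ s, C i j k * (W s * DE s j) * Z k := by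
    symm
    calc (∑ j, ∑ k, ∑ s, C i j k * (W s * DE s j) * Z k)
        = ∑ a, ∑ b, ∑ c, C i c a * (W b * DE b c) * Z a :=
          rotA fun a b c => C i a b * (W c * DE c a) * Z b
      _ = ∑ j, ∑ k, ∑ s, (DE k s * C i j s) * (Z j * W k) :=
          Finset.sum_congr rfl fun a _ => Finset.sum_congr rfl fun b _ =>
            Finset.sum_congr rfl fun c _ => by rw [hCs i c a]; ring
  rw [hL, hR1, hR2, hR3]
  linarith [m1, m2, m3, m4, m5, m6]

end Helpers

theorem statement_3 {n : ℕ} (U : Set (Fin n → ℝ)) (hU : IsOpen U)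
    (c : SC n)
    (hc_smooth : ∀ i j k, ContDiffOn ℝ (⊤ : ℕ∞) (c i j k) U)
    (hc_comm : ∀ i j k, ∀ x ∈ U, c i j k x = c i k j x)
    (hHM : ∀ i j k l m, ∀ x ∈ U,
      ∑ s, (pd (c k j l) s x * c s i m x + pd (c s i m) j x * c k s l x
        - pd (c k i m) s x * c s j l x - pd (c s j l) i x * c k s m x
        - pd (c s j m) l x * c k s i x - pd (c s l i) m x * c k j s x) = 0)
    (e : VF n) (he_smooth : ∀ i, ContDiffOn ℝ (⊤ : ℕ∞) (e i) U)
    (he_unit : ∀ Z : VF n, ∀ x ∈ U, ∀ i, circ c e Z i x = Z i x) :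
    (∀ Z W : VF n, (∀ i, ContDiffOn ℝ (⊤ : ℕ∞) (Z i) U) → (∀ i, ContDiffOn ℝ (⊤ : ℕ∞) (W i) U) →
      ∀ x ∈ U, ∀ i,
        lieB e (circ c Z W) i x = circ c (lieB e Z) W i x + circ c (lieB e W) Z i x) ∧
      (∀ i j k, ∀ x ∈ U, liec c e i j k x = 0) := by
  have hdc : ∀ i j k, ∀ x ∈ U, DifferentiableAt ℝ (c i j k) x :=
    fun i j k x hx => diffAt hU hx (hc_smooth i j k)
  have hde : ∀ i, ∀ x ∈ U, DifferentiableAt ℝ (e i) x :=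
    fun i x hx => diffAt hU hx (he_smooth i)
  have hF1 : ∀ x ∈ U, ∀ a b, (∑ j, c a j b x * e j x) = if a = b then 1 else 0 := by
    intro x hx a b
    have h := he_unit (fun k _ => if k = b then (1 : ℝ) else 0) x hx a
    simp only [circ, mul_ite, mul_one, mul_zero, Finset.sum_ite_eq', Finset.mem_univ,
      if_true] at h
    exact h
  have hG1 : ∀ x ∈ U, ∀ p a b,
      (∑ j, (pd (c a j b) p x * e j x + c a j b x * pd (e j) p x)) = 0 := by
    intro x hx p a b
    have hdiff : ∀ j : Fin n, DifferentiableAt ℝ (fun y => c a j b y * e j y) x :=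
      fun j => (hdc a j b x hx).mul (hde j x hx)
    have h1 : pd (fun y => ∑ j, c a j b y * e j y) p x = 0 := by
      rw [pd_congr hU hx (fun y hy => hF1 y hy a b) p]
      exact pd_const _ _ _
    have h2 : pd (fun y => ∑ j, c a j b y * e j y) p x
        = ∑ j, (c a j b x * pd (e j) p x + e j x * pd (c a j b) p x) := by
      rw [pd_sum (fun j y => c a j b y * e j y) hdiff p]
      exact Finset.sum_congr rfl fun j _ =>
        pd_mul (c a j b) (e j) (hdc a j b x hx) (hde j x hx) p
    calc (∑ j, (pd (c a j b) p x * e j x + c a j b x * pd (e j) p x))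
        = ∑ j, (c a j b x * pd (e j) p x + e j x * pd (c a j b) p x) :=
          Finset.sum_congr rfl fun j _ => by ring
      _ = 0 := h2.symm.trans h1
  have hDCs : ∀ x ∈ U, ∀ p a b d, pd (c a b d) p x = pd (c a d b) p x :=
    fun x hx p a b d => pd_congr hU hx (fun y hy => hc_comm a b d y hy) p
  have part2 : ∀ i j k, ∀ x ∈ U, liec c e i j k x = 0 := by
    intro i j k x hx
    have h := core_alg (fun a b d => c a b d x) (fun p a b d => pd (c a b d) p x)
      (fun s => e s x) (fun p s => pd (e s) p x)
      (fun a b d => hc_comm a b d x hx) (fun p a b d => hDCs x hx p a b d)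
      (hF1 x hx) (hG1 x hx) (fun a b k' l' m' => hHM a b k' l' m' x hx) i j k
    simpa [liec] using h
  refine ⟨?_, part2⟩
  intro Z W hZ hW x hx i
  have hdZ : ∀ j, DifferentiableAt ℝ (Z j) x := fun j => diffAt hU hx (hZ j)
  have hdW : ∀ j, DifferentiableAt ℝ (W j) x := fun j => diffAt hU hx (hW j)
  have hpd : ∀ s, pd (circ c Z W i) s x
      = ∑ j, ∑ k, (pd (c i j k) s x * (Z j x * W k x)
        + c i j k x * (pd (Z j) s x * W k x) + c i j k x * (Z j x * pd (W k) s x)) := by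
    intro s
    have h1 : circ c Z W i = fun y => ∑ j, ∑ k, c i j k y * Z j y * W k y := rfl
    rw [h1, pd_sum (fun j y => ∑ k, c i j k y * Z j y * W k y)
      (fun j => DifferentiableAt.fun_sum fun k _ => ((hdc i j k x hx).mul (hdZ j)).mul (hdW k)) s]
    refine Finset.sum_congr rfl fun j _ => ?_
    rw [pd_sum (fun k y => c i j k y * Z j y * W k y)
      (fun k => ((hdc i j k x hx).mul (hdZ j)).mul (hdW k)) s]
    refine Finset.sum_congr rfl fun k _ => ?_
    rw [pd_mul (fun y => c i j k y * Z j y) (W k) ((hdc i j k x hx).mul (hdZ j)) (hdW k) s,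
      pd_mul (c i j k) (Z j) (hdc i j k x hx) (hdZ j) s]
    ring
  calc lieB e (circ c Z W) i x
      = ∑ s, (e s x * (∑ j, ∑ k, (pd (c i j k) s x * (Z j x * W k x)
          + c i j k x * (pd (Z j) s x * W k x) + c i j k x * (Z j x * pd (W k) s x)))
        - (∑ j, ∑ k, c s j k x * (Z j x * W k x)) * pd (e i) s x) := by
        simp only [lieB]
        refine Finset.sum_congr rfl fun s _ => ?_
        rw [hpd s]
        have hc2 : circ c Z W s x = ∑ j, ∑ k, c s j k x * (Z j x * W k x) := by
          simp only [circ]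
          exact Finset.sum_congr rfl fun j _ => Finset.sum_congr rfl fun k _ => by ring
        rw [hc2]
    _ = (∑ j, ∑ k, (∑ s, (e s x * pd (c i j k) s x - pd (e i) s x * c s j k x
          + pd (e s) j x * c i s k x + pd (e s) k x * c i j s x)) * (Z j x * W k x))
        + (∑ j, ∑ k, c i j k x * (∑ s, (e s x * pd (Z j) s x - Z s x * pd (e j) s x)) * W k x)
        + (∑ j, ∑ k, c i j k x * (∑ s, (e s x * pd (W j) s x - W s x * pd (e j) s x)) * Z k x) :=
        part1_alg (fun a b d => c a b d x) (fun p a b d => pd (c a b d) p x)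
          (fun s => e s x) (fun j => Z j x) (fun k => W k x)
          (fun p s => pd (e s) p x) (fun p j => pd (Z j) p x) (fun p k => pd (W k) p x) i
          (fun a b d => hc_comm a b d x hx)
    _ = circ c (lieB e Z) W i x + circ c (lieB e W) Z i x := by
        have hz : (∑ j, ∑ k, (∑ s, (e s x * pd (c i j k) s x - pd (e i) s x * c s j k x
            + pd (e s) j x * c i s k x + pd (e s) k x * c i j s x)) * (Z j x * W k x)) = 0 :=
          Finset.sum_eq_zero fun j _ => Finset.sum_eq_zero fun k _ => by
            have hl : (∑ s, (e s x * pd (c i j k) s x - pd (e i) s x * c s j k x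
                + pd (e s) j x * c i s k x + pd (e s) k x * c i j s x)) = liec c e i j k x := rfl
            rw [hl, part2 i j k x hx, zero_mul]
        rw [hz, zero_add]
        simp only [circ, lieB]
end
end

section
/- Let Γ^i_{jk} be a torsionless connection and c^i_{jk} smooth structure functions, symmetric in (j,k), on an open set U ⊆ ℝ^n. The one-parameter family of connections Γ̃(z)^i_{jk} = Γ^i_{jk} + z c^i_{jk} has vanishing curvature for all z ∈ ℝ if and only if the following three conditions hold: (i) the curvature of Γ vanishes; (ii) the symmetry condition ∇_l c^i_{jk} = ∇_j c^i_{lk} holds; (iii) c is associative: c^i_{jm} c^m_{kl} = c^i_{km} c^m_{jl}. -/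
open scoped BigOperators

noncomputable section

/-- Covariant derivative of the structure functions:
`∇_l c^i_{jk} = ∂_l c^i_{jk} + Γ^i_{ls} c^s_{jk} − Γ^s_{lj} c^i_{sk} − Γ^s_{lk} c^i_{js}`. -/
def nablaC {n : ℕ} (Γ c : SC n) (l i j k : Fin n) (x : Fin n → ℝ) : ℝ :=
  pd (c i j k) l x + ∑ s, (Γ i l s x * c s j k x - Γ s l j x * c i s k x - Γ s l k x * c i j s x)

/-- Curvature tensor `R^i_{lmp} = ∂_m Γ^i_{pl} − ∂_p Γ^i_{ml} + Γ^i_{ms} Γ^s_{pl} − Γ^i_{ps} Γ^s_{ml}`. -/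
def Riem {n : ℕ} (Γ : SC n) (i l m p : Fin n) (x : Fin n → ℝ) : ℝ :=
  pd (Γ i p l) m x - pd (Γ i m l) p x
    + ∑ s, (Γ i m s x * Γ s p l x - Γ i p s x * Γ s m l x)

lemma pd_add_smul {n : ℕ} (f g : (Fin n → ℝ) → ℝ) (z : ℝ) (j : Fin n) (x : Fin n → ℝ)
    (hf : DifferentiableAt ℝ f x) (hg : DifferentiableAt ℝ g x) :
    pd (fun y => f y + z * g y) j x = pd f j x + z * pd g j x := by
  unfold pd
  rw [fderiv_fun_add hf (hg.const_mul z), fderiv_const_mul hg]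
  simp

lemma riem_expand {n : ℕ} (U : Set (Fin n → ℝ)) (hU : IsOpen U)
    (Γ : SC n)
    (hΓ_smooth : ∀ i j k, ContDiffOn ℝ (⊤ : ℕ∞) (Γ i j k) U)
    (hΓ_tor : ∀ i j k, ∀ x ∈ U, Γ i j k x = Γ i k j x)
    (c : SC n)
    (hc_smooth : ∀ i j k, ContDiffOn ℝ (⊤ : ℕ∞) (c i j k) U)
    (z : ℝ) (i l m p : Fin n) (x : Fin n → ℝ) (hx : x ∈ U) :
    Riem (fun a b d y => Γ a b d y + z * c a b d y) i l m p x
      = Riem Γ i l m p x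
        + z * (nablaC Γ c m i p l x - nablaC Γ c p i m l x)
        + z ^ 2 * ((∑ s, c i m s x * c s p l x) - ∑ s, c i p s x * c s m l x) := by
  have dΓ : ∀ a b d, DifferentiableAt ℝ (Γ a b d) x := fun a b d =>
    ((hΓ_smooth a b d).contDiffAt (hU.mem_nhds hx)).differentiableAt (by simp)
  have dc : ∀ a b d, DifferentiableAt ℝ (c a b d) x := fun a b d =>
    ((hc_smooth a b d).contDiffAt (hU.mem_nhds hx)).differentiableAt (by simp)
  have hsum :
      ∑ s, ((Γ i m s x + z * c i m s x) * (Γ s p l x + z * c s p l x)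
          - (Γ i p s x + z * c i p s x) * (Γ s m l x + z * c s m l x))
      = (∑ s, (Γ i m s x * Γ s p l x - Γ i p s x * Γ s m l x))
        + z * ((∑ s, (Γ i m s x * c s p l x - Γ s m p x * c i s l x - Γ s m l x * c i p s x))
              - ∑ s, (Γ i p s x * c s m l x - Γ s p m x * c i s l x - Γ s p l x * c i m s x))
        + z ^ 2 * ((∑ s, c i m s x * c s p l x) - ∑ s, c i p s x * c s m l x) := by
    rw [← Finset.sum_sub_distrib, ← Finset.sum_sub_distrib, Finset.mul_sum, Finset.mul_sum,
      ← Finset.sum_add_distrib, ← Finset.sum_add_distrib]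
    refine Finset.sum_congr rfl fun s _ => ?_
    have ht := hΓ_tor s m p x hx
    ring_nf
    rw [ht]
    ring
  simp only [Riem, nablaC]
  rw [pd_add_smul _ _ _ _ _ (dΓ i p l) (dc i p l), pd_add_smul _ _ _ _ _ (dΓ i m l) (dc i m l),
    hsum]
  ring

theorem statement_8 {n : ℕ} (U : Set (Fin n → ℝ)) (hU : IsOpen U)
    (Γ : SC n)
    (hΓ_smooth : ∀ i j k, ContDiffOn ℝ (⊤ : ℕ∞) (Γ i j k) U)
    (hΓ_tor : ∀ i j k, ∀ x ∈ U, Γ i j k x = Γ i k j x)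
    (c : SC n)
    (hc_smooth : ∀ i j k, ContDiffOn ℝ (⊤ : ℕ∞) (c i j k) U)
    (hc_comm : ∀ i j k, ∀ x ∈ U, c i j k x = c i k j x) :
    (∀ z : ℝ, ∀ i l m p, ∀ x ∈ U,
        Riem (fun a b d y => Γ a b d y + z * c a b d y) i l m p x = 0)
      ↔ ((∀ i l m p, ∀ x ∈ U, Riem Γ i l m p x = 0)
        ∧ (∀ i j k l, ∀ x ∈ U, nablaC Γ c l i j k x = nablaC Γ c j i l k x)
        ∧ (∀ i j k l, ∀ x ∈ U,
            ∑ m, c i j m x * c m k l x = ∑ m, c i k m x * c m j l x)) := by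
  have key := riem_expand U hU Γ hΓ_smooth hΓ_tor c hc_smooth
  constructor
  · intro h
    have hexp : ∀ z : ℝ, ∀ i l m p, ∀ x ∈ U,
        Riem Γ i l m p x
          + z * (nablaC Γ c m i p l x - nablaC Γ c p i m l x)
          + z ^ 2 * ((∑ s, c i m s x * c s p l x) - ∑ s, c i p s x * c s m l x) = 0 := by
      intro z i l m p x hx
      rw [← key z i l m p x hx]; exact h z i l m p x hx
    have hR : ∀ i l m p, ∀ x ∈ U, Riem Γ i l m p x = 0 := by
      intro i l m p x hx
      have := hexp 0 i l m p x hx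
      simpa using this
    refine ⟨hR, ?_, ?_⟩
    · intro i j k l x hx
      have h1 := hexp 1 i k l j x hx
      have h2 := hexp (-1) i k l j x hx
      rw [hR i k l j x hx] at h1 h2
      nlinarith [h1, h2]
    · intro i j k l x hx
      have h1 := hexp 1 i l j k x hx
      have h2 := hexp (-1) i l j k x hx
      rw [hR i l j k x hx] at h1 h2
      nlinarith [h1, h2]
  · rintro ⟨hR, hN, hC⟩ z i l m p x hx
    rw [key z i l m p x hx, hR i l m p x hx, hN i p l m x hx, hC i m p l x hx]
    ring
end
end

section
/- Let c^i_{jk} be smooth structure functions on an open set U ⊆ ℝ^n, symmetric in (j,k) and associative, and let Γ^i_{jk} be a torsionless connection satisfying the symmetry condition ∇_l c^i_{jk} = ∇_j c^i_{lk}. Suppose X and Y are smooth vector fields both satisfying condition (admvf): c^i_{jm} ∇_k X^m = c^i_{km} ∇_j X^m and c^i_{jm} ∇_k Y^m = c^i_{km} ∇_j Y^m for all i,j,k. Then for every smooth vector field Z: ((Lie_X c)(Y,Z) − (Lie_Y c)(X,Z) + [X,Y]∘Z)∘Z = 0; in particular the associated hydrodynamic flows commute. -/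
open scoped BigOperators

noncomputable section

/-- `((Lie_X c)(Y,Z))^i = (Lie_X c)^i_{jk} Y^j Z^k`. -/
def liecApp {n : ℕ} (c : SC n) (X Y Z : VF n) : VF n :=
  fun i x => ∑ j, ∑ k, liec c X i j k x * Y j x * Z k x

/-- Covariant derivative of a vector field: `∇_j X^i = ∂_j X^i + Γ^i_{jk} X^k`. -/
def nablaV {n : ℕ} (Γ : SC n) (X : VF n) (j i : Fin n) (x : Fin n → ℝ) : ℝ :=
  pd (X i) j x + ∑ k, Γ i j k x * X k x

namespace S10

variable {n : ℕ}

lemma sumswap (f : Fin n → Fin n → ℝ) : ∑ a, ∑ b, f a b = ∑ a, ∑ b, f b a :=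
  Finset.sum_comm


lemma cancel2 (F : Fin n → Fin n → ℝ) : ∑ a, ∑ b, (F a b - F b a) = 0 := by
  simp only [Finset.sum_sub_distrib]
  rw [sumswap F]
  exact sub_self _

lemma swap13 (f : Fin n → Fin n → Fin n → ℝ) :
    ∑ a, ∑ b, ∑ c, f a b c = ∑ a, ∑ b, ∑ c, f c b a := by
  calc ∑ a, ∑ b, ∑ c, f a b c
      = ∑ b, ∑ a, ∑ c, f a b c := Finset.sum_comm
    _ = ∑ b, ∑ c, ∑ a, f a b c := Finset.sum_congr rfl fun _ _ => Finset.sum_comm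
    _ = ∑ c, ∑ b, ∑ a, f a b c := Finset.sum_comm

lemma rot5 (f : Fin n → Fin n → Fin n → Fin n → Fin n → ℝ) :
    ∑ a, ∑ b, ∑ c, ∑ d, ∑ e, f a b c d e = ∑ b, ∑ c, ∑ d, ∑ e, ∑ a, f a b c d e := by
  calc ∑ a, ∑ b, ∑ c, ∑ d, ∑ e, f a b c d e
      = ∑ b, ∑ a, ∑ c, ∑ d, ∑ e, f a b c d e := Finset.sum_comm
    _ = ∑ b, ∑ c, ∑ a, ∑ d, ∑ e, f a b c d e :=
        Finset.sum_congr rfl fun _ _ => Finset.sum_comm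
    _ = ∑ b, ∑ c, ∑ d, ∑ a, ∑ e, f a b c d e :=
        Finset.sum_congr rfl fun _ _ => Finset.sum_congr rfl fun _ _ => Finset.sum_comm
    _ = ∑ b, ∑ c, ∑ d, ∑ e, ∑ a, f a b c d e :=
        Finset.sum_congr rfl fun _ _ => Finset.sum_congr rfl fun _ _ =>
          Finset.sum_congr rfl fun _ _ => Finset.sum_comm

lemma contract_sum {f g : Fin n → ℝ} (h : ∑ s, f s = ∑ s, g s) (r : ℝ) :
    ∑ s, f s * r = ∑ s, g s * r := by
  rw [← Finset.sum_mul, h, Finset.sum_mul]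

lemma csym (C : Fin n → Fin n → Fin n → ℝ)
    (hcomm : ∀ i j k, C i j k = C i k j)
    (hassoc : ∀ i j k l, ∑ m, C i j m * C m k l = ∑ m, C i k m * C m j l)
    (i a b d : Fin n) : ∑ s, C i s a * C s b d = ∑ s, C i s d * C s b a := by
  calc ∑ s, C i s a * C s b d
      = ∑ s, C i a s * C s b d := Finset.sum_congr rfl fun s _ => by rw [hcomm i s a]
    _ = ∑ s, C i b s * C s a d := hassoc i a b d
    _ = ∑ s, C i b s * C s d a := Finset.sum_congr rfl fun s _ => by rw [hcomm s a d]
    _ = ∑ s, C i d s * C s b a := hassoc i b d a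
    _ = ∑ s, C i s d * C s b a := Finset.sum_congr rfl fun s _ => by rw [hcomm i d s]

lemma final_pair (C : Fin n → Fin n → Fin n → ℝ) (D : Fin n → Fin n → ℝ)
    (u vZ : Fin n → ℝ)
    (hcomm : ∀ i j k, C i j k = C i k j)
    (hassoc : ∀ i j k l, ∑ m, C i j m * C m k l = ∑ m, C i k m * C m j l)
    (hadm : ∀ i j k, ∑ m, C i j m * D k m = ∑ m, C i k m * D j m)
    (i : Fin n) :
    ∑ m, ∑ k, ∑ p, ∑ q, ∑ s, C i m k * (C m q s * D p s * u p * vZ q) * vZ k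
    = ∑ m, ∑ k, ∑ p, ∑ q, ∑ s, C i m k * (D s m * C s p q * u p * vZ q) * vZ k := by
  calc
    ∑ m, ∑ k, ∑ p, ∑ q, ∑ s, C i m k * (C m q s * D p s * u p * vZ q) * vZ k
      = ∑ m, ∑ k, ∑ p, ∑ q, ∑ s, (C m q s * D p s) * (C i m k * u p * vZ q * vZ k) := by
        refine Finset.sum_congr rfl fun m _ => Finset.sum_congr rfl fun k _ =>
          Finset.sum_congr rfl fun p _ => Finset.sum_congr rfl fun q _ =>
          Finset.sum_congr rfl fun s _ => by ring
    _ = ∑ m, ∑ k, ∑ p, ∑ q, ∑ s, (C m p s * D q s) * (C i m k * u p * vZ q * vZ k) := by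
        refine Finset.sum_congr rfl fun m _ => Finset.sum_congr rfl fun k _ =>
          Finset.sum_congr rfl fun p _ => Finset.sum_congr rfl fun q _ => ?_
        exact contract_sum (hadm m q p) _
    _ = ∑ m, ∑ k, ∑ p, ∑ q, ∑ s, (C m p s * D k s) * (C i m q * u p * vZ k * vZ q) := by
        refine Finset.sum_congr rfl fun m _ => ?_
        exact swap13 (fun k p q => ∑ s, (C m p s * D q s) * (C i m k * u p * vZ q * vZ k))
    _ = ∑ k, ∑ p, ∑ q, ∑ s, ∑ m, (C m p s * D k s) * (C i m q * u p * vZ k * vZ q) :=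
        rot5 (fun m k p q s => (C m p s * D k s) * (C i m q * u p * vZ k * vZ q))
    _ = ∑ k, ∑ p, ∑ q, ∑ s, ∑ m, (C i m q * C m p s) * (D k s * u p * vZ k * vZ q) := by
        refine Finset.sum_congr rfl fun k _ => Finset.sum_congr rfl fun p _ =>
          Finset.sum_congr rfl fun q _ => Finset.sum_congr rfl fun s _ =>
          Finset.sum_congr rfl fun m _ => by ring
    _ = ∑ k, ∑ p, ∑ q, ∑ s, ∑ m, (C i m s * C m p q) * (D k s * u p * vZ k * vZ q) := by
        refine Finset.sum_congr rfl fun k _ => Finset.sum_congr rfl fun p _ =>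
          Finset.sum_congr rfl fun q _ => Finset.sum_congr rfl fun s _ => ?_
        exact contract_sum (csym C hcomm hassoc i q p s) _
    _ = ∑ k, ∑ p, ∑ q, ∑ s, ∑ m, (C i s m * C s p q) * (D k m * u p * vZ k * vZ q) := by
        refine Finset.sum_congr rfl fun k _ => Finset.sum_congr rfl fun p _ =>
          Finset.sum_congr rfl fun q _ => ?_
        exact sumswap (fun s m => (C i m s * C m p q) * (D k s * u p * vZ k * vZ q))
    _ = ∑ k, ∑ p, ∑ q, ∑ s, ∑ m, (C i s m * D k m) * (C s p q * u p * vZ k * vZ q) := by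
        refine Finset.sum_congr rfl fun k _ => Finset.sum_congr rfl fun p _ =>
          Finset.sum_congr rfl fun q _ => Finset.sum_congr rfl fun s _ =>
          Finset.sum_congr rfl fun m _ => by ring
    _ = ∑ k, ∑ p, ∑ q, ∑ s, ∑ m, (C i k m * D s m) * (C s p q * u p * vZ k * vZ q) := by
        refine Finset.sum_congr rfl fun k _ => Finset.sum_congr rfl fun p _ =>
          Finset.sum_congr rfl fun q _ => Finset.sum_congr rfl fun s _ => ?_
        exact contract_sum (hadm i s k) _
    _ = ∑ k, ∑ p, ∑ q, ∑ s, ∑ m, C i m k * (D s m * C s p q * u p * vZ q) * vZ k := by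
        refine Finset.sum_congr rfl fun k _ => Finset.sum_congr rfl fun p _ =>
          Finset.sum_congr rfl fun q _ => Finset.sum_congr rfl fun s _ =>
          Finset.sum_congr rfl fun m _ => by rw [hcomm i k m]; ring
    _ = ∑ m, ∑ k, ∑ p, ∑ q, ∑ s, C i m k * (D s m * C s p q * u p * vZ q) * vZ k :=
        (rot5 (fun m k p q s => C i m k * (D s m * C s p q * u p * vZ q) * vZ k)).symm





variable {n : ℕ}

lemma key (C : Fin n → Fin n → Fin n → ℝ)
    (NC : Fin n → Fin n → Fin n → Fin n → ℝ)
    (DX DY : Fin n → Fin n → ℝ)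
    (vX vY vZ : Fin n → ℝ)
    (hcomm : ∀ i j k, C i j k = C i k j)
    (hassoc : ∀ i j k l, ∑ m, C i j m * C m k l = ∑ m, C i k m * C m j l)
    (hsymNC : ∀ l i j k, NC l i j k = NC j i l k)
    (hadmX : ∀ i j k, ∑ m, C i j m * DX k m = ∑ m, C i k m * DX j m)
    (hadmY : ∀ i j k, ∑ m, C i j m * DY k m = ∑ m, C i k m * DY j m)
    (i : Fin n) :
    ∑ m, ∑ k, C i m k *
      ((∑ p, ∑ q, (∑ s, (vX s * NC s m p q - DX s m * C s p q
          + DX p s * C m s q + DX q s * C m p s)) * vY p * vZ q)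
      - (∑ p, ∑ q, (∑ s, (vY s * NC s m p q - DY s m * C s p q
          + DY p s * C m s q + DY q s * C m p s)) * vX p * vZ q)
      + (∑ p, ∑ q, C m p q * (∑ s, (vX s * DY s p - vY s * DX s p)) * vZ q)) * vZ k = 0 := by
  have expand : ∀ (m : Fin n) (w : Fin n → ℝ) (D : Fin n → Fin n → ℝ) (u : Fin n → ℝ),
      (∑ p, ∑ q, (∑ s, (w s * NC s m p q - D s m * C s p q
          + D p s * C m s q + D q s * C m p s)) * u p * vZ q)
      = (((∑ p, ∑ q, ∑ s, w s * NC s m p q * u p * vZ q)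
        - ∑ p, ∑ q, ∑ s, D s m * C s p q * u p * vZ q)
        + ∑ p, ∑ q, ∑ s, D p s * C m s q * u p * vZ q)
        + ∑ p, ∑ q, ∑ s, D q s * C m p s * u p * vZ q := by
    intro m w D u
    simp only [Finset.sum_mul, sub_mul, add_mul, Finset.sum_sub_distrib,
      Finset.sum_add_distrib]
  have expandCb : ∀ m : Fin n,
      (∑ p, ∑ q, C m p q * (∑ s, (vX s * DY s p - vY s * DX s p)) * vZ q)
      = (∑ p, ∑ q, ∑ s, C m p q * (vX s * DY s p) * vZ q)
        - ∑ p, ∑ q, ∑ s, C m p q * (vY s * DX s p) * vZ q := by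
    intro m
    simp only [Finset.mul_sum, mul_sub, Finset.sum_mul, sub_mul, Finset.sum_sub_distrib]
  have eA1B1 : ∀ m : Fin n,
      (∑ p, ∑ q, ∑ s, vX s * NC s m p q * vY p * vZ q)
      = ∑ p, ∑ q, ∑ s, vY s * NC s m p q * vX p * vZ q := by
    intro m
    rw [swap13 (fun p q s => vX s * NC s m p q * vY p * vZ q)]
    exact Finset.sum_congr rfl fun p _ => Finset.sum_congr rfl fun q _ =>
      Finset.sum_congr rfl fun s _ => by rw [hsymNC p m s q]; ring
  have eA3 : ∀ (m : Fin n) (D : Fin n → Fin n → ℝ) (u : Fin n → ℝ),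
      (∑ p, ∑ q, ∑ s, D p s * C m s q * u p * vZ q)
      = ∑ p, ∑ q, ∑ s, C m p q * (u s * D s p) * vZ q := by
    intro m D u
    rw [swap13 (fun p q s => D p s * C m s q * u p * vZ q)]
    exact Finset.sum_congr rfl fun p _ => Finset.sum_congr rfl fun q _ =>
      Finset.sum_congr rfl fun s _ => by ring
  have eA4 : ∀ (m : Fin n) (D : Fin n → Fin n → ℝ) (u : Fin n → ℝ),
      (∀ a b d, ∑ e, C a b e * D d e = ∑ e, C a d e * D b e) →
      (∑ p, ∑ q, ∑ s, D q s * C m p s * u p * vZ q)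
      = ∑ p, ∑ q, ∑ s, C m q s * D p s * u p * vZ q := by
    intro m D u hadm
    refine Finset.sum_congr rfl fun p _ => Finset.sum_congr rfl fun q _ => ?_
    calc ∑ s, D q s * C m p s * u p * vZ q
        = ∑ s, (C m p s * D q s) * (u p * vZ q) :=
          Finset.sum_congr rfl fun s _ => by ring
      _ = ∑ s, (C m q s * D p s) * (u p * vZ q) := contract_sum (hadm m p q) _
      _ = ∑ s, C m q s * D p s * u p * vZ q :=
          Finset.sum_congr rfl fun s _ => by ring
  have hW : ∀ m : Fin n,
      ((∑ p, ∑ q, (∑ s, (vX s * NC s m p q - DX s m * C s p q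
          + DX p s * C m s q + DX q s * C m p s)) * vY p * vZ q)
      - (∑ p, ∑ q, (∑ s, (vY s * NC s m p q - DY s m * C s p q
          + DY p s * C m s q + DY q s * C m p s)) * vX p * vZ q)
      + (∑ p, ∑ q, C m p q * (∑ s, (vX s * DY s p - vY s * DX s p)) * vZ q))
      = ((∑ p, ∑ q, ∑ s, C m q s * DX p s * vY p * vZ q)
          - ∑ p, ∑ q, ∑ s, DX s m * C s p q * vY p * vZ q)
        - ((∑ p, ∑ q, ∑ s, C m q s * DY p s * vX p * vZ q)
          - ∑ p, ∑ q, ∑ s, DY s m * C s p q * vX p * vZ q) := by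
    intro m
    rw [expand m vX DX vY, expand m vY DY vX, expandCb m, eA4 m DX vY hadmX,
      eA4 m DY vX hadmY, eA1B1 m, eA3 m DX vY, eA3 m DY vX]
    ring
  simp only [hW]
  simp only [mul_sub, sub_mul, Finset.sum_sub_distrib]
  have p1 : ∑ m, ∑ k, C i m k * (∑ p, ∑ q, ∑ s, C m q s * DX p s * vY p * vZ q) * vZ k
      = ∑ m, ∑ k, ∑ p, ∑ q, ∑ s, C i m k * (C m q s * DX p s * vY p * vZ q) * vZ k := by
    refine Finset.sum_congr rfl fun m _ => Finset.sum_congr rfl fun k _ => ?_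
    simp only [Finset.mul_sum, Finset.sum_mul]
  have p2 : ∑ m, ∑ k, C i m k * (∑ p, ∑ q, ∑ s, DX s m * C s p q * vY p * vZ q) * vZ k
      = ∑ m, ∑ k, ∑ p, ∑ q, ∑ s, C i m k * (DX s m * C s p q * vY p * vZ q) * vZ k := by
    refine Finset.sum_congr rfl fun m _ => Finset.sum_congr rfl fun k _ => ?_
    simp only [Finset.mul_sum, Finset.sum_mul]
  have p3 : ∑ m, ∑ k, C i m k * (∑ p, ∑ q, ∑ s, C m q s * DY p s * vX p * vZ q) * vZ k
      = ∑ m, ∑ k, ∑ p, ∑ q, ∑ s, C i m k * (C m q s * DY p s * vX p * vZ q) * vZ k := by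
    refine Finset.sum_congr rfl fun m _ => Finset.sum_congr rfl fun k _ => ?_
    simp only [Finset.mul_sum, Finset.sum_mul]
  have p4 : ∑ m, ∑ k, C i m k * (∑ p, ∑ q, ∑ s, DY s m * C s p q * vX p * vZ q) * vZ k
      = ∑ m, ∑ k, ∑ p, ∑ q, ∑ s, C i m k * (DY s m * C s p q * vX p * vZ q) * vZ k := by
    refine Finset.sum_congr rfl fun m _ => Finset.sum_congr rfl fun k _ => ?_
    simp only [Finset.mul_sum, Finset.sum_mul]
  rw [p1, p2, p3, p4, final_pair C DX vY vZ hcomm hassoc hadmX i,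
    final_pair C DY vX vZ hcomm hassoc hadmY i]
  ring


end S10


theorem statement_10 {n : ℕ} (U : Set (Fin n → ℝ)) (hU : IsOpen U)
    (c : SC n)
    (hc_smooth : ∀ i j k, ContDiffOn ℝ (⊤ : ℕ∞) (c i j k) U)
    (hc_comm : ∀ i j k, ∀ x ∈ U, c i j k x = c i k j x)
    (hc_assoc : ∀ i j k l, ∀ x ∈ U,
      ∑ m, c i j m x * c m k l x = ∑ m, c i k m x * c m j l x)
    (Γ : SC n)
    (hΓ_smooth : ∀ i j k, ContDiffOn ℝ (⊤ : ℕ∞) (Γ i j k) U)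
    (hΓ_tor : ∀ i j k, ∀ x ∈ U, Γ i j k x = Γ i k j x)
    (hsym : ∀ i j k l, ∀ x ∈ U, nablaC Γ c l i j k x = nablaC Γ c j i l k x)
    (X : VF n) (hX : ∀ i, ContDiffOn ℝ (⊤ : ℕ∞) (X i) U)
    (Y : VF n) (hY : ∀ i, ContDiffOn ℝ (⊤ : ℕ∞) (Y i) U)
    (hXadm : ∀ i j k, ∀ x ∈ U,
      ∑ m, c i j m x * nablaV Γ X k m x = ∑ m, c i k m x * nablaV Γ X j m x)
    (hYadm : ∀ i j k, ∀ x ∈ U,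
      ∑ m, c i j m x * nablaV Γ Y k m x = ∑ m, c i k m x * nablaV Γ Y j m x) :
    ∀ Z : VF n, (∀ i, ContDiffOn ℝ (⊤ : ℕ∞) (Z i) U) → ∀ x ∈ U, ∀ i,
      circ c (fun i' x' => liecApp c X Y Z i' x' - liecApp c Y X Z i' x'
        + circ c (lieB X Y) Z i' x') Z i x = 0 := by
  intro Z hZ x hx i
  have htor : ∀ a b d, Γ a b d x = Γ a d b x := fun a b d => hΓ_tor a b d x hx
  -- pd-form to covariant-form conversion for the Lie derivative of c
  have hliecV : ∀ (V : VF n) (m p q : Fin n),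
      (∑ s, (V s x * pd (c m p q) s x - pd (V m) s x * c s p q x
        + pd (V s) p x * c m s q x + pd (V s) q x * c m p s x))
      = ∑ s, (V s x * nablaC Γ c s m p q x - nablaV Γ V s m x * c s p q x
        + nablaV Γ V p s x * c m s q x + nablaV Γ V q s x * c m p s x) := by
    intro V m p q
    have h1 : (∑ s, (V s x * nablaC Γ c s m p q x - nablaV Γ V s m x * c s p q x
          + nablaV Γ V p s x * c m s q x + nablaV Γ V q s x * c m p s x))
        - (∑ s, (V s x * pd (c m p q) s x - pd (V m) s x * c s p q x
          + pd (V s) p x * c m s q x + pd (V s) q x * c m p s x))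
        = ∑ s, ∑ t, (V s x * (Γ m s t x * c t p q x - Γ t s p x * c m t q x
              - Γ t s q x * c m p t x)
            - Γ m s t x * V t x * c s p q x + Γ s p t x * V t x * c m s q x
            + Γ s q t x * V t x * c m p s x) := by
      rw [← Finset.sum_sub_distrib]
      refine Finset.sum_congr rfl fun s _ => ?_
      have e1 : ∑ t, (V s x * (Γ m s t x * c t p q x - Γ t s p x * c m t q x
              - Γ t s q x * c m p t x)
            - Γ m s t x * V t x * c s p q x + Γ s p t x * V t x * c m s q x
            + Γ s q t x * V t x * c m p s x)
          = V s x * (∑ t, (Γ m s t x * c t p q x - Γ t s p x * c m t q x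
              - Γ t s q x * c m p t x))
            - (∑ t, Γ m s t x * V t x) * c s p q x
            + (∑ t, Γ s p t x * V t x) * c m s q x
            + (∑ t, Γ s q t x * V t x) * c m p s x := by
        simp only [Finset.sum_add_distrib, Finset.sum_sub_distrib, ← Finset.mul_sum,
          ← Finset.sum_mul]
      rw [e1]
      simp only [nablaC, nablaV]
      ring
    have h0 : (∑ s, ∑ t, (V s x * (Γ m s t x * c t p q x - Γ t s p x * c m t q x
            - Γ t s q x * c m p t x)
          - Γ m s t x * V t x * c s p q x + Γ s p t x * V t x * c m s q x
          + Γ s q t x * V t x * c m p s x)) = 0 := by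
      have c1 : ∑ s, ∑ t, (Γ m s t x * V s x * c t p q x - Γ m t s x * V t x * c s p q x)
          = 0 := S10.cancel2 (fun a b => Γ m a b x * V a x * c b p q x)
      have c2 : ∑ s, ∑ t, (Γ s t p x * V t x * c m s q x - Γ t s p x * V s x * c m t q x)
          = 0 := S10.cancel2 (fun a b => Γ a b p x * V b x * c m a q x)
      have c3 : ∑ s, ∑ t, (Γ s t q x * V t x * c m p s x - Γ t s q x * V s x * c m p t x)
          = 0 := S10.cancel2 (fun a b => Γ a b q x * V b x * c m p a x)
      have hsplit : ∀ s t : Fin n,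
          (V s x * (Γ m s t x * c t p q x - Γ t s p x * c m t q x - Γ t s q x * c m p t x)
            - Γ m s t x * V t x * c s p q x + Γ s p t x * V t x * c m s q x
            + Γ s q t x * V t x * c m p s x)
          = (Γ m s t x * V s x * c t p q x - Γ m t s x * V t x * c s p q x)
            + ((Γ s t p x * V t x * c m s q x - Γ t s p x * V s x * c m t q x)
            + (Γ s t q x * V t x * c m p s x - Γ t s q x * V s x * c m p t x)) := by
        intro s t
        rw [htor m t s, htor s t p, htor s t q]
        ring
      calc (∑ s, ∑ t, (V s x * (Γ m s t x * c t p q x - Γ t s p x * c m t q x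
              - Γ t s q x * c m p t x)
            - Γ m s t x * V t x * c s p q x + Γ s p t x * V t x * c m s q x
            + Γ s q t x * V t x * c m p s x))
          = ∑ s, ∑ t, ((Γ m s t x * V s x * c t p q x - Γ m t s x * V t x * c s p q x)
            + ((Γ s t p x * V t x * c m s q x - Γ t s p x * V s x * c m t q x)
            + (Γ s t q x * V t x * c m p s x - Γ t s q x * V s x * c m p t x))) :=
            Finset.sum_congr rfl fun s _ => Finset.sum_congr rfl fun t _ => hsplit s t
        _ = 0 := by
            simp only [Finset.sum_add_distrib]
            rw [c1, c2, c3]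
            norm_num
    rw [h0] at h1
    linarith [h1]
  -- pd-form to covariant-form conversion for the Lie bracket
  have hlieB' : ∀ m : Fin n, (∑ j, (X j x * pd (Y m) j x - Y j x * pd (X m) j x))
      = ∑ j, (X j x * nablaV Γ Y j m x - Y j x * nablaV Γ X j m x) := by
    intro m
    have h1 : (∑ j, (X j x * nablaV Γ Y j m x - Y j x * nablaV Γ X j m x))
        - (∑ j, (X j x * pd (Y m) j x - Y j x * pd (X m) j x))
        = ∑ j, ∑ t, (Γ m j t x * (X j x * Y t x) - Γ m t j x * (X t x * Y j x)) := by
      rw [← Finset.sum_sub_distrib]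
      refine Finset.sum_congr rfl fun j _ => ?_
      have e1 : ∑ t, (Γ m j t x * (X j x * Y t x) - Γ m t j x * (X t x * Y j x))
          = X j x * (∑ t, Γ m j t x * Y t x) - Y j x * (∑ t, Γ m j t x * X t x) := by
        rw [Finset.sum_sub_distrib]
        congr 1
        · rw [Finset.mul_sum]; exact Finset.sum_congr rfl fun t _ => by ring
        · rw [Finset.mul_sum]
          exact Finset.sum_congr rfl fun t _ => by rw [htor m t j]; ring
      rw [e1]
      simp only [nablaV]
      ring
    have h0 : ∑ j, ∑ t, (Γ m j t x * (X j x * Y t x) - Γ m t j x * (X t x * Y j x)) = 0 :=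
      S10.cancel2 (fun a b => Γ m a b x * (X a x * Y b x))
    rw [h0] at h1
    linarith [h1]
  simp only [circ, liecApp, liec, lieB]
  simp only [hliecV X, hliecV Y, hlieB']
  exact S10.key (fun a b d => c a b d x) (fun l a b d => nablaC Γ c l a b d x)
    (fun a b => nablaV Γ X a b x) (fun a b => nablaV Γ Y a b x)
    (fun a => X a x) (fun a => Y a x) (fun a => Z a x)
    (fun a b d => hc_comm a b d x hx)
    (fun a b d e => hc_assoc a b d e x hx)
    (fun l a b d => hsym a b d l x hx)
    (fun a b d => hXadm a b d x hx)
    (fun a b d => hYadm a b d x hx)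
    i
end
end
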